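/- arXiv:1502.02159 — 9 statements merged into one kernel-verified Lean document; each statement's English description precedes it below -/
import Mathlib

section
/- Let G be a simple graph, C a longest cycle in G with a fixed orientation, and H a connected component of G − V(C). Then no vertex of C that has a neighbor in H is immediately followed on C by another vertex of C with a neighbor in H; that is, N_G(H) ∩ V(C) and its set of successors along C are disjoint. -/
open SimpleGraph

def IsCycleEmb {V : Type*} (G : SimpleGraph V) (n : ℕ) (f : ZMod n → V) : Prop :=
  3 ≤ n ∧ Function.Injective f ∧ ∀ i : ZMod n, G.Adj (f i) (f (i + 1))

def IsLongestCycle {V : Type*} (G : SimpleGraph V) (n : ℕ) (f : ZMod n → V) : Prop :=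
  IsCycleEmb G n f ∧ ∀ (m : ℕ) (g : ZMod m → V), IsCycleEmb G m g → m ≤ n

def IsDominatingCycle {V : Type*} (G : SimpleGraph V) (n : ℕ) (f : ZMod n → V) : Prop :=
  IsCycleEmb G n f ∧ ∀ a b : V, G.Adj a b → a ∈ Set.range f ∨ b ∈ Set.range f

def IsCompOutside {V : Type*} (G : SimpleGraph V) (C : Set V) (H : Set V) : Prop :=
  H.Nonempty ∧ Disjoint H C ∧ (G.induce H).Connected ∧
    ∀ a ∈ H, ∀ b : V, G.Adj a b → b ∉ C → b ∈ H

def TwoConnected {V : Type*} (G : SimpleGraph V) : Prop :=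
  3 ≤ Nat.card V ∧ ∀ v : V, (G.induce ({v}ᶜ : Set V)).Connected

def KConnected {V : Type*} (G : SimpleGraph V) (k : ℕ) : Prop :=
  k < Nat.card V ∧ ∀ S : Set V, S.ncard < k → (G.induce (Sᶜ : Set V)).Connected

def HFree {W V : Type*} (H : SimpleGraph W) (G : SimpleGraph V) : Prop :=
  ¬ Nonempty (H ↪g G)

def IsCompleteMultipartite {V : Type*} (G : SimpleGraph V) : Prop :=
  ∃ s : Setoid V, ∀ a b : V, G.Adj a b ↔ ¬ s.r a b

/-- `W = K₁ + 3K₂`: vertex 0 joined to three disjoint edges 12, 34, 56. -/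
def Wgraph : SimpleGraph (Fin 7) :=
  SimpleGraph.fromRel (fun a b =>
    a = 0 ∨ (a = 1 ∧ b = 2) ∨ (a = 3 ∧ b = 4) ∨ (a = 5 ∧ b = 6))

/-- `Z₁`, the paw: triangle 012 plus pendant edge 23. -/
def pawGraph : SimpleGraph (Fin 4) :=
  SimpleGraph.fromRel (fun a b =>
    (a = 0 ∧ b = 1) ∨ (a = 1 ∧ b = 2) ∨ (a = 0 ∧ b = 2) ∨ (a = 2 ∧ b = 3))

/-- The claw `K₁,₃`. -/
def clawGraph : SimpleGraph (Fin 4) :=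
  SimpleGraph.fromRel (fun a _ => a = 0)

/-- `K₄` minus the edge 23. -/
def K4minusGraph : SimpleGraph (Fin 4) :=
  SimpleGraph.fromRel (fun a b => ¬((a = 2 ∧ b = 3) ∨ (a = 3 ∧ b = 2)))

/-- `K₁,₃**`: spider with legs of lengths 2, 2, 1 (center 0, legs 0-1-2, 0-3-4, 0-5). -/
def spider221 : SimpleGraph (Fin 6) :=
  SimpleGraph.fromRel (fun a b =>
    (a = 0 ∧ b = 1) ∨ (a = 1 ∧ b = 2) ∨ (a = 0 ∧ b = 3) ∨ (a = 3 ∧ b = 4) ∨ (a = 0 ∧ b = 5))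

/-- The theta graph `A_s`: two vertices joined by three internally disjoint paths,
each with `s` internal vertices. -/
def thetaGraph (s : ℕ) : SimpleGraph (Fin 2 ⊕ Fin 3 × Fin s) :=
  SimpleGraph.fromRel (fun a b =>
    (∃ (j : Fin 3) (k : Fin s), a = Sum.inl 0 ∧ b = Sum.inr (j, k) ∧ (k : ℕ) = 0) ∨
    (∃ (j : Fin 3) (k : Fin s), a = Sum.inl 1 ∧ b = Sum.inr (j, k) ∧ (k : ℕ) = s - 1) ∨
    (∃ (j : Fin 3) (k l : Fin s), a = Sum.inr (j, k) ∧ b = Sum.inr (j, l) ∧ (l : ℕ) = (k : ℕ) + 1))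

/-- `A′_s = 2K₁ + sK₂`. -/
def APrime (s : ℕ) : SimpleGraph (Fin 2 ⊕ Fin s × Fin 2) :=
  SimpleGraph.fromRel (fun a b =>
    (∃ (i : Fin 2) (x : Fin s × Fin 2), a = Sum.inl i ∧ b = Sum.inr x) ∨
    (∃ j : Fin s, a = Sum.inr (j, 0) ∧ b = Sum.inr (j, 1)))

/-- `A″_s = K₂ + (2K₂ ∪ K_s)`. -/
def ADoublePrime (s : ℕ) : SimpleGraph (Fin 2 ⊕ (Fin 2 × Fin 2 ⊕ Fin s)) :=
  SimpleGraph.fromRel (fun a b =>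
    (∃ i : Fin 2, a = Sum.inl i) ∨
    (∃ j : Fin 2, a = Sum.inr (Sum.inl (j, 0)) ∧ b = Sum.inr (Sum.inl (j, 1))) ∨
    (∃ p q : Fin s, a = Sum.inr (Sum.inr p) ∧ b = Sum.inr (Sum.inr q)))

/-- `A_s⁽¹⁾`: two disjoint triangles joined by three vertex-disjoint paths with `s`
internal vertices each. -/
def AOne (s : ℕ) : SimpleGraph (Fin 2 × Fin 3 ⊕ Fin 3 × Fin s) :=
  SimpleGraph.fromRel (fun a b =>
    (∃ (t : Fin 2) (i j : Fin 3), a = Sum.inl (t, i) ∧ b = Sum.inl (t, j)) ∨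
    (∃ (j : Fin 3) (k : Fin s), a = Sum.inl (0, j) ∧ b = Sum.inr (j, k) ∧ (k : ℕ) = 0) ∨
    (∃ (j : Fin 3) (k : Fin s), a = Sum.inl (1, j) ∧ b = Sum.inr (j, k) ∧ (k : ℕ) = s - 1) ∨
    (∃ (j : Fin 3) (k l : Fin s), a = Sum.inr (j, k) ∧ b = Sum.inr (j, l) ∧ (l : ℕ) = (k : ℕ) + 1))

/-- `A_s⁽⁵⁾`: vertices `x₁, x₂` and `y_{i,j}`; edges `x₁x₂`, `y_{1,j}y_{2,j}`, `x_i y_{i,j}`. -/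
def AFive (s : ℕ) : SimpleGraph (Fin 2 ⊕ Fin 2 × Fin s) :=
  SimpleGraph.fromRel (fun a b =>
    (a = Sum.inl 0 ∧ b = Sum.inl 1) ∨
    (∃ j : Fin s, a = Sum.inr (0, j) ∧ b = Sum.inr (1, j)) ∨
    (∃ (i : Fin 2) (j : Fin s), a = Sum.inl i ∧ b = Sum.inr (i, j)))

/-!
If two consecutive vertices `f i`, `f (i + 1)` of the cycle had neighbours `x`, `y` in `H`, then
replacing the edge `f i f (i + 1)` by a path from `x` to `y` inside the connected set `H`, which
avoids the cycle, would give a strictly longer cycle.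
-/

namespace SimpleGraph

variable {V : Type*} {G : SimpleGraph V}

theorem exists_isCycleEmb_of_isChain {l : List V} (hlen : 3 ≤ l.length) (hnd : l.Nodup)
    (hc : l.IsChain G.Adj) (hclose : ∀ a ∈ l.getLast?, ∀ b ∈ l.head?, G.Adj a b) :
    ∃ g : ZMod l.length → V, IsCycleEmb G l.length g := by
  have : NeZero l.length := ⟨by omega⟩
  refine ⟨fun j => l[j.val]'(ZMod.val_lt j), hlen,
    fun j k h => ZMod.val_injective _ (hnd.getElem_inj_iff.mp h), fun j => ?_⟩
  have hj := ZMod.val_lt j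
  have hsucc : (j + 1).val = (j.val + 1) % l.length := by
    rw [← ZMod.val_natCast, Nat.cast_add, ZMod.natCast_zmod_val, Nat.cast_one]
  rcases Nat.lt_or_ge (j.val + 1) l.length with hlt | hge
  · simp only [hsucc, Nat.mod_eq_of_lt hlt]
    exact List.isChain_iff_getElem.mp hc _ hlt
  · have hwrap : (j.val + 1) % l.length = 0 := by
      rw [show j.val + 1 = l.length by omega, Nat.mod_self]
    simp only [hsucc, hwrap]
    refine hclose _ ?_ _ ?_
    · simp [List.getLast?_eq_getElem?, show l.length - 1 = j.val by omega]
    · simp [List.head?_eq_getElem?]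

def cycleSupport {n : ℕ} (f : ZMod n → V) (a : ZMod n) : List V :=
  (List.range n).map fun k : ℕ => f (a + (k : ZMod n))

section cycleSupport

variable {n : ℕ} {f : ZMod n → V}

@[simp]
theorem length_cycleSupport (a : ZMod n) : (cycleSupport f a).length = n := by
  simp [cycleSupport]

theorem IsCycleEmb.nodup_cycleSupport (hf : IsCycleEmb G n f) (a : ZMod n) :
    (cycleSupport f a).Nodup := by
  refine List.Nodup.map_on (fun k hk l hl h => ?_) List.nodup_range
  rw [List.mem_range] at hk hl
  have := (ZMod.natCast_eq_natCast_iff' k l n).mp (add_left_cancel (hf.2.1 h))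
  rwa [Nat.mod_eq_of_lt hk, Nat.mod_eq_of_lt hl] at this

theorem IsCycleEmb.isChain_cycleSupport (hf : IsCycleEmb G n f) (a : ZMod n) :
    (cycleSupport f a).IsChain G.Adj := by
  refine List.isChain_iff_getElem.mpr fun k hk => ?_
  simpa [cycleSupport, add_assoc] using hf.2.2 (a + k)

theorem IsCycleEmb.head?_cycleSupport (hf : IsCycleEmb G n f) (a : ZMod n) :
    (cycleSupport f a).head? = some (f a) := by
  obtain ⟨m, rfl⟩ : ∃ m, n = m + 1 := ⟨n - 1, by have := hf.1; omega⟩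
  simp [cycleSupport, List.range_succ_eq_map]

theorem IsCycleEmb.getLast?_cycleSupport (hf : IsCycleEmb G n f) (a : ZMod n) :
    (cycleSupport f (a + 1)).getLast? = some (f a) := by
  obtain ⟨m, rfl⟩ : ∃ m, n = m + 1 := ⟨n - 1, by have := hf.1; omega⟩
  have hwrap : (1 + m : ZMod (m + 1)) = 0 := by simp [add_comm]
  simp [cycleSupport, List.range_succ, add_assoc, hwrap]

end cycleSupport

theorem IsCycleEmb.exists_isCycleEmb_of_isPath {n : ℕ} {f : ZMod n → V} (hf : IsCycleEmb G n f)
    (i : ZMod n) {x y : V} (p : G.Walk x y) (hp : p.IsPath)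
    (hdisj : ∀ v ∈ p.support, v ∉ Set.range f) (hx : G.Adj (f i) x) (hy : G.Adj y (f (i + 1))) :
    ∃ g : ZMod (n + p.length + 1) → V, IsCycleEmb G (n + p.length + 1) g := by
  let l := p.support ++ cycleSupport f (i + 1)
  have hlen : l.length = n + p.length + 1 := by simp [l]; omega
  have hnd : l.Nodup := List.nodup_append.mpr ⟨hp.support_nodup, hf.nodup_cycleSupport _,
    fun v hv _ hw hvw => by
      obtain ⟨k, -, rfl⟩ := List.mem_map.mp hw
      exact hdisj v hv ⟨_, hvw.symm⟩⟩
  have hc : l.IsChain G.Adj := p.isChain_adj_support.append (hf.isChain_cycleSupport _)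
    (by simp [hf.head?_cycleSupport, List.getLast?_eq_some_getLast p.support_ne_nil, hy])
  obtain ⟨g, hg⟩ := exists_isCycleEmb_of_isChain (by have := hf.1; omega) hnd hc
    (by simp [l, hf.getLast?_cycleSupport, List.head?_eq_some_head p.support_ne_nil, hx])
  exact hlen ▸ ⟨g, hg⟩

end SimpleGraph

open SimpleGraph

theorem stmt0_general {V : Type*} (G : SimpleGraph V) (n : ℕ) (f : ZMod n → V)
    (H : Set V) (hC : IsLongestCycle G n f) (hH : IsCompOutside G (Set.range f) H)
    (i : ZMod n) (hi : ∃ x ∈ H, G.Adj (f i) x) :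
    ¬ ∃ x ∈ H, G.Adj (f (i + 1)) x := by
  classical
  rintro ⟨y, hyH, hy⟩
  obtain ⟨x, hxH, hx⟩ := hi
  obtain ⟨w⟩ := hH.2.2.1.preconnected ⟨x, hxH⟩ ⟨y, hyH⟩
  let p := w.toPath.1.map (Embedding.induce H).toHom
  have hp : p.IsPath := w.toPath.2.map (Embedding.induce (G := G) H).injective
  have hdisj : ∀ v ∈ p.support, v ∉ Set.range f := by
    simp only [p, Walk.support_map, List.mem_map]
    rintro _ ⟨v, -, rfl⟩
    exact Set.disjoint_left.mp hH.2.1 v.2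
  obtain ⟨g, hg⟩ := hC.1.exists_isCycleEmb_of_isPath i p hp hdisj hx hy.symm
  have := hC.2 _ g hg
  omega

/-- If `C` is a longest cycle and `H` a component of `G - V(C)`, then no vertex of `C`
with a neighbor in `H` is immediately followed on `C` by another such vertex. -/
theorem stmt0 {V : Type*} [Fintype V] (G : SimpleGraph V) (n : ℕ) (f : ZMod n → V)
    (H : Set V) (hC : IsLongestCycle G n f) (hH : IsCompOutside G (Set.range f) H)
    (i : ZMod n) (hi : ∃ x ∈ H, G.Adj (f i) x) :
    ¬ ∃ x ∈ H, G.Adj (f (i + 1)) x :=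
  stmt0_general G n f H hC hH i hi
end

section
/- Let G be a simple graph, C a longest cycle in G with a fixed orientation, H a component of G − V(C), and let u, v be distinct vertices of C each having a neighbor in H. Then u⁺v⁺ ∉ E(G) and u⁻v⁻ ∉ E(G), where u⁺, u⁻ denote the successor and predecessor of u on C. -/
open SimpleGraph

/-!
If `u = f i` and `v = f j` both see `H`, join their neighbours `x, y ∈ H` by a path `P` inside
`H`. An edge `u⁺v⁺` would then give the cycle `u⁺ → … → v` (along `C`), `v → P → u`,
`u → … → v⁺` (against `C`), `v⁺ → u⁺`, which uses every vertex of `C` and those of `P`: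
longer than `C`. The statement for predecessors is the one for successors on the reversed cycle.
-/
theorem exists_isCycleEmb_of_nodup_of_isChain {V : Type*} {G : SimpleGraph V} {L : List V}
    (hlen : 3 ≤ L.length) (hnd : L.Nodup) (hch : L.IsChain G.Adj)
    (hclose : ∀ a ∈ L.getLast?, ∀ b ∈ L.head?, G.Adj a b) :
    ∃ g : ZMod L.length → V, IsCycleEmb G L.length g := by
  have : NeZero L.length := ⟨by omega⟩
  refine ⟨fun z => L[z.val]'z.val_lt, hlen, fun a b hab => ?_, fun z => ?_⟩
  · exact ZMod.val_injective _ ((List.Nodup.getElem_inj_iff hnd).mp hab)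
  · have hsucc : (z + 1).val = (z.val + 1) % L.length := by
      rw [ZMod.val_add, ZMod.val_one_eq_one_mod, Nat.add_mod_mod]
    have hz := z.val_lt
    by_cases hlt : z.val + 1 < L.length
    · simp only [hsucc, Nat.mod_eq_of_lt hlt]
      exact List.isChain_iff_getElem.mp hch z.val hlt
    · have hlast : z.val + 1 = L.length := by omega
      simp only [hsucc, hlast, Nat.mod_self]
      apply hclose
      · simp [List.getLast?_eq_getElem?, ← hlast]
      · simp [List.head?_eq_getElem?]

section CycleArc

variable {V : Type*} {n : ℕ}

def cycleArc (f : ZMod n → V) (a : ZMod n) (d : ℕ) : List V :=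
  (List.range d).map fun t : ℕ => f (a + t)

theorem cycleArc_add (f : ZMod n → V) (a : ZMod n) (d e : ℕ) :
    cycleArc f a (d + e) = cycleArc f a d ++ cycleArc f (a + d) e := by
  simp [cycleArc, List.range_add, add_assoc]

theorem cycleArc_succ_head? (f : ZMod n → V) (a : ZMod n) (d : ℕ) :
    (cycleArc f a (d + 1)).head? = some (f a) := by
  simp [cycleArc, List.range_succ_eq_map]

theorem cycleArc_succ_getLast? (f : ZMod n → V) (a : ZMod n) (d : ℕ) :
    (cycleArc f a (d + 1)).getLast? = some (f (a + d)) := by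
  simp [cycleArc, List.range_succ]

theorem mem_range_of_mem_cycleArc {f : ZMod n → V} {a : ZMod n} {d : ℕ} {v : V}
    (hv : v ∈ cycleArc f a d) : v ∈ Set.range f := by
  obtain ⟨t, -, rfl⟩ := List.mem_map.mp hv
  exact ⟨_, rfl⟩

theorem isChain_cycleArc {G : SimpleGraph V} {f : ZMod n → V}
    (hf : ∀ k, G.Adj (f k) (f (k + 1))) (a : ZMod n) (d : ℕ) :
    (cycleArc f a d).IsChain G.Adj := by
  refine List.isChain_iff_getElem.mpr fun t ht => ?_
  simpa [cycleArc, add_assoc] using hf (a + t)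

theorem nodup_cycleArc {f : ZMod n → V} (hf : Function.Injective f) (a : ZMod n) {d : ℕ}
    (hd : d ≤ n) : (cycleArc f a d).Nodup := by
  refine List.Nodup.map_on (fun s hs t ht hst => ?_) List.nodup_range
  rw [List.mem_range] at hs ht
  have hcast : (s : ZMod n) = t := add_left_cancel (hf hst)
  rwa [ZMod.natCast_eq_natCast_iff', Nat.mod_eq_of_lt (by omega),
    Nat.mod_eq_of_lt (by omega)] at hcast

end CycleArc

theorem ZMod.exists_add_one_add_eq_of_ne {n : ℕ} [NeZero n] {i j : ZMod n} (hij : i ≠ j) :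
    ∃ k l : ℕ, n = k + 1 + (l + 1) ∧ i + 1 + k = j ∧ j + 1 + l = i := by
  set k := (j - i - 1).val
  have hk : i + 1 + k = j := by simp [k]
  have hkn : k + 1 < n := by
    refine lt_of_le_of_ne (ZMod.val_lt _) fun hkn => hij ?_
    have h := congrArg (Nat.cast : ℕ → ZMod n) hkn
    push_cast [ZMod.natCast_self] at h
    linear_combination hk - h
  refine ⟨k, n - k - 2, by omega, hk, ?_⟩
  have h := congrArg (Nat.cast : ℕ → ZMod n) (show n = k + 1 + (n - k - 2 + 1) by omega)
  push_cast [ZMod.natCast_self] at h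
  linear_combination -hk - h

theorem SimpleGraph.Walk.head?_support {V : Type*} {G : SimpleGraph V} {u v : V}
    (p : G.Walk u v) : p.support.head? = some u := by
  rw [← p.cons_tail_support]; rfl

theorem SimpleGraph.Walk.getLast?_support {V : Type*} {G : SimpleGraph V} {u v : V}
    (p : G.Walk u v) : p.support.getLast? = some v := by
  rw [List.getLast?_eq_some_getLast p.support_ne_nil, p.getLast_support]

theorem IsLongestCycle.not_adj_succ_of_path {V : Type*} {G : SimpleGraph V} {n : ℕ}
    {f : ZMod n → V} (hC : IsLongestCycle G n f) {i j : ZMod n} (hij : i ≠ j) {x y : V}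
    (p : G.Walk y x) (hp : p.IsPath) (hout : ∀ v ∈ p.support, v ∉ Set.range f)
    (hix : G.Adj (f i) x) (hjy : G.Adj (f j) y) : ¬ G.Adj (f (i + 1)) (f (j + 1)) := by
  intro hadj
  obtain ⟨⟨hn, hinj, hf⟩, hmax⟩ := hC
  have : NeZero n := ⟨by omega⟩
  obtain ⟨k, l, hl, hk, hl'⟩ := ZMod.exists_add_one_add_eq_of_ne hij
  -- `A` runs along `C` from `u⁺` to `v` and `B` from `v⁺` to `u`, so `A ++ B` is all of `C`.
  set A := cycleArc f (i + 1) (k + 1)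
  set B := cycleArc f (j + 1) (l + 1)
  have hAB : (A ++ B).Nodup := by
    have h := nodup_cycleArc hinj (i + 1) hl.symm.le
    rwa [cycleArc_add, show i + 1 + ((k + 1 : ℕ) : ZMod n) = j + 1 by
      push_cast; linear_combination hk] at h
  set L := A ++ (p.support ++ B.reverse)
  have hnd : L.Nodup := by
    rw [List.nodup_append] at hAB
    simp only [L, List.nodup_append, List.nodup_reverse, List.mem_append, List.mem_reverse]
    refine ⟨hAB.1, ⟨hp.support_nodup, hAB.2.1, ?_⟩, ?_⟩
    · rintro v hv w hw rfl
      exact hout v hv (mem_range_of_mem_cycleArc hw)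
    · rintro v hv w (hw | hw) rfl
      · exact hout v hw (mem_range_of_mem_cycleArc hv)
      · exact hAB.2.2 v hv v hw rfl
  have hAlast : A.getLast? = some (f j) := by rw [cycleArc_succ_getLast?, hk]
  have hBlast : B.getLast? = some (f i) := by rw [cycleArc_succ_getLast?, hl']
  have hch : L.IsChain G.Adj := by
    simp only [L, List.isChain_append, List.isChain_reverse, List.head?_append,
      List.head?_reverse, Walk.head?_support, Walk.getLast?_support, hAlast, hBlast]
    refine ⟨isChain_cycleArc hf _ _, ⟨p.isChain_adj_support, ?_, ?_⟩, ?_⟩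
    · exact (isChain_cycleArc hf _ _).imp fun _ _ h => h.symm
    · simpa using hix.symm
    · simpa using hjy
  have hclose : ∀ a ∈ L.getLast?, ∀ b ∈ L.head?, G.Adj a b := by
    simp only [L, List.getLast?_append, List.head?_append, List.getLast?_reverse, A, B,
      cycleArc_succ_head?]
    simpa using hadj.symm
  have hlen : L.length = n + p.support.length := by
    simp only [L, A, B, cycleArc, List.length_append, List.length_map, List.length_range,
      List.length_reverse]
    omega
  obtain ⟨g, hg⟩ := exists_isCycleEmb_of_nodup_of_isChain (by omega) hnd hch hclose
  have := hmax _ g hg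
  have := p.support.length_pos_of_ne_nil p.support_ne_nil
  omega

theorem IsLongestCycle.comp_neg {V : Type*} {G : SimpleGraph V} {n : ℕ} {f : ZMod n → V}
    (hC : IsLongestCycle G n f) : IsLongestCycle G n (f ∘ Neg.neg) := by
  obtain ⟨⟨hn, hinj, hf⟩, hmax⟩ := hC
  refine ⟨⟨hn, hinj.comp neg_injective, fun k => ?_⟩, hmax⟩
  simpa [neg_add_eq_sub] using (hf (-(k + 1))).symm

theorem IsCompOutside.exists_isPath {V : Type*} {G : SimpleGraph V} {C H : Set V}
    (hH : IsCompOutside G C H) {x y : V} (hx : x ∈ H) (hy : y ∈ H) :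
    ∃ p : G.Walk y x, p.IsPath ∧ ∀ v ∈ p.support, v ∈ H := by
  obtain ⟨-, -, hconn, -⟩ := hH
  obtain ⟨q, hq⟩ := (hconn ⟨y, hy⟩ ⟨x, hx⟩).exists_isPath
  refine ⟨q.map (Embedding.induce H).toHom, hq.map Subtype.val_injective, ?_⟩
  intro v hv
  obtain ⟨⟨w, hw⟩, -, rfl⟩ := List.mem_map.mp ((q.support_map _).symm ▸ hv)
  exact hw

theorem stmt1_general {V : Type*} (G : SimpleGraph V) (n : ℕ) (f : ZMod n → V)
    (H : Set V) (hC : IsLongestCycle G n f) (hH : IsCompOutside G (Set.range f) H)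
    (i j : ZMod n) (hij : f i ≠ f j)
    (hu : ∃ x ∈ H, G.Adj (f i) x) (hv : ∃ x ∈ H, G.Adj (f j) x) :
    ¬ G.Adj (f (i + 1)) (f (j + 1)) ∧ ¬ G.Adj (f (i - 1)) (f (j - 1)) := by
  obtain ⟨x, hxH, hix⟩ := hu
  obtain ⟨y, hyH, hjy⟩ := hv
  obtain ⟨p, hp, hpH⟩ := hH.exists_isPath hxH hyH
  have hout : ∀ v ∈ p.support, v ∉ Set.range f :=
    fun v hv => Set.disjoint_left.mp hH.2.1 (hpH v hv)
  have hij' : i ≠ j := fun h => hij (congrArg f h)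
  refine ⟨hC.not_adj_succ_of_path hij' p hp hout hix hjy, ?_⟩
  have hrange : Set.range (f ∘ Neg.neg) = Set.range f := neg_surjective.range_comp f
  simpa [neg_add_eq_sub] using hC.comp_neg.not_adj_succ_of_path (neg_injective.ne hij') p hp
    (hrange ▸ hout) (by simpa using hix) (by simpa using hjy)

/-- If `u = f i` and `v = f j` are distinct vertices of a longest cycle `C`, each with a
neighbor in a component `H` of `G - V(C)`, then `u⁺v⁺ ∉ E(G)` and `u⁻v⁻ ∉ E(G)`. -/
theorem stmt1 {V : Type*} [Fintype V] (G : SimpleGraph V) (n : ℕ) (f : ZMod n → V)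
    (H : Set V) (hC : IsLongestCycle G n f) (hH : IsCompOutside G (Set.range f) H)
    (i j : ZMod n) (hij : f i ≠ f j)
    (hu : ∃ x ∈ H, G.Adj (f i) x) (hv : ∃ x ∈ H, G.Adj (f j) x) :
    ¬ G.Adj (f (i + 1)) (f (j + 1)) ∧ ¬ G.Adj (f (i - 1)) (f (j - 1)) :=
  stmt1_general G n f H hC hH i j hij hu hv
end

section
/- Let G be a connected Z₁-free graph (Z₁ is the graph obtained from a triangle by attaching one pendant vertex, i.e., the paw). If G contains a triangle, then G is a complete multipartite graph. -/
open SimpleGraph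

/-! In a paw-free graph, a neighbour of one vertex of a triangle is adjacent to a second vertex
of it. Propagating this along paths of a connected paw-free graph with a triangle, every edge `ac`
lies on a triangle `acd`, and every vertex is adjacent to one of `a`, `c`, `d`, hence to `a` or
`c`. So non-adjacency is transitive: the graph is complete multipartite. -/

namespace SimpleGraph

variable {V : Type*} {G : SimpleGraph V}

theorem Preconnected.forall_of_adj_closed (hG : G.Preconnected) {P : V → Prop}
    (hP : ∀ ⦃u v⦄, G.Adj u v → P u → P v) {x : V} (hx : P x) (v : V) : P v := by
  have h := hG x v
  rw [reachable_eq_reflTransGen] at h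
  induction h with
  | refl => exact hx
  | tail _ huv ih => exact hP huv ih

end SimpleGraph

section PawFree

variable {V : Type*} {G : SimpleGraph V}

theorem adj_or_adj_of_pawFree (hfree : HFree pawGraph G)
    {x y z w : V} (hxy : G.Adj x y) (hyz : G.Adj y z) (hxz : G.Adj x z) (hwx : G.Adj w x) :
    G.Adj w y ∨ G.Adj w z := by
  by_contra! ⟨hwy, hwz⟩
  refine hfree ⟨⟨⟨![y, z, x, w], fun i j h => ?_⟩, fun {i j} => ?_⟩⟩
  · fin_cases i <;> fin_cases j <;> simp_all [hxy.ne, hyz.ne, hxz.ne, hwx.ne, adj_comm]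
  · change G.Adj (![y, z, x, w] i) (![y, z, x, w] j) ↔ pawGraph.Adj i j
    fin_cases i <;> fin_cases j <;>
      simp [pawGraph, hxy, hyz, hxz, hwx, hxy.symm, hyz.symm, hxz.symm, hwx.symm, hwy, hwz,
        G.adj_comm _ w]

theorem exists_adj_adj_of_pawFree (hfree : HFree pawGraph G) {u v p q : V}
    (hvp : G.Adj v p) (hvq : G.Adj v q) (hpq : G.Adj p q) (huv : G.Adj u v) :
    ∃ t, G.Adj u t ∧ G.Adj v t := by
  rcases adj_or_adj_of_pawFree hfree hvp hpq hvq huv with hup | huq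
  · exact ⟨p, hup, hvp⟩
  · exact ⟨q, huq, hvq⟩

theorem exists_triangle_of_pawFree (hfree : HFree pawGraph G) (hG : G.Preconnected)
    {x y z : V} (hxy : G.Adj x y) (hyz : G.Adj y z) (hxz : G.Adj x z) (v : V) :
    ∃ p q, G.Adj v p ∧ G.Adj v q ∧ G.Adj p q := by
  refine hG.forall_of_adj_closed (P := fun v => ∃ p q, G.Adj v p ∧ G.Adj v q ∧ G.Adj p q) ?_
    ⟨y, z, hxy, hxz, hyz⟩ v
  rintro u w huw ⟨p, q, hup, huq, hpq⟩
  obtain ⟨t, hwt, hut⟩ := exists_adj_adj_of_pawFree hfree hup huq hpq huw.symm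
  exact ⟨u, t, huw.symm, hwt, hut⟩

theorem adj_triangle_of_adj_of_pawFree (hfree : HFree pawGraph G)
    {x y z u v : V} (hxy : G.Adj x y) (hyz : G.Adj y z) (hxz : G.Adj x z) (huv : G.Adj u v)
    (hv : G.Adj v x ∨ G.Adj v y ∨ G.Adj v z) : G.Adj u x ∨ G.Adj u y ∨ G.Adj u z := by
  have of_adj_first : ∀ {p q r}, G.Adj p q → G.Adj q r → G.Adj p r → G.Adj v p →
      G.Adj u p ∨ G.Adj u q ∨ G.Adj u r := by
    intro p q r hpq hqr hpr hvp
    rcases adj_or_adj_of_pawFree hfree hpq hqr hpr hvp with hvq | hvr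
    · have := adj_or_adj_of_pawFree hfree hvp hpq hvq huv
      tauto
    · have := adj_or_adj_of_pawFree hfree hvp hpr hvr huv
      tauto
  rcases hv with hvx | hvy | hvz
  · exact of_adj_first hxy hyz hxz hvx
  · have := of_adj_first hxy.symm hxz hyz hvy
    tauto
  · have := of_adj_first hxz.symm hxy hyz.symm hvz
    tauto

theorem adj_or_adj_of_pawFree_of_preconnected (hfree : HFree pawGraph G) (hG : G.Preconnected)
    {x y z : V} (hxy : G.Adj x y) (hyz : G.Adj y z) (hxz : G.Adj x z)
    {a c : V} (hac : G.Adj a c) (b : V) : G.Adj b a ∨ G.Adj b c := by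
  obtain ⟨p, q, hap, haq, hpq⟩ := exists_triangle_of_pawFree hfree hG hxy hyz hxz a
  obtain ⟨d, hcd, had⟩ := exists_adj_adj_of_pawFree hfree hap haq hpq hac.symm
  have hb : G.Adj b a ∨ G.Adj b c ∨ G.Adj b d :=
    hG.forall_of_adj_closed (fun u w huw hu => adj_triangle_of_adj_of_pawFree hfree hac hcd had
      huw.symm hu) (Or.inr (Or.inl hac)) b
  rcases hb with hba | hbc | hbd
  exacts [Or.inl hba, Or.inr hbc, adj_or_adj_of_pawFree hfree had.symm hac hcd.symm hbd]

theorem isCompleteMultipartite_of_pawFree (hfree : HFree pawGraph G) (hG : G.Preconnected)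
    {x y z : V} (hxy : G.Adj x y) (hyz : G.Adj y z) (hxz : G.Adj x z) :
    G.IsCompleteMultipartite := by
  by_contra h
  obtain ⟨b, a, c, hac, hba, hbc⟩ := not_isCompleteMultipartite_iff_exists_isPathGraph3Compl.1 h
  exact (adj_or_adj_of_pawFree_of_preconnected hfree hG hxy hyz hxz hac b).elim hba hbc

end PawFree

theorem stmt5_general {V : Type*} (G : SimpleGraph V) (hconn : G.Connected)
    (hfree : HFree pawGraph G)
    (htri : ∃ a b c : V, G.Adj a b ∧ G.Adj b c ∧ G.Adj a c) :
    _root_.IsCompleteMultipartite G := by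
  obtain ⟨a, b, c, hab, hbc, hac⟩ := htri
  have h := isCompleteMultipartite_of_pawFree hfree hconn.preconnected hab hbc hac
  exact ⟨h.setoid, fun _ _ => not_not.symm⟩

/-- Olariu: a connected paw-free graph containing a triangle is complete multipartite. -/
theorem stmt5 {V : Type*} [Fintype V] (G : SimpleGraph V) (hconn : G.Connected)
    (hfree : HFree pawGraph G)
    (htri : ∃ a b c : V, G.Adj a b ∧ G.Adj b c ∧ G.Adj a c) :
    _root_.IsCompleteMultipartite G :=
  stmt5_general G hconn hfree htri
end

section
/- Let G be a 2-connected complete multipartite graph (with at least two parts, so that G contains a cycle). Then every longest cycle of G is a dominating cycle: for every longest cycle C, there is no edge of G with both endpoints outside V(C). -/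
open SimpleGraph

/-!
The ends of an edge `ab` of a complete multipartite graph lie in different parts, so every
vertex is adjacent to `a` or to `b`. Hence if `ab` avoids a longest cycle and `xy` is an edge of
the cycle, one of the detours `x a y`, `x b y`, `x a b y`, `x b a y` gives a longer cycle.
-/

section

variable {V : Type*} {G : SimpleGraph V}

lemma IsCompleteMultipartite.adj_or_adj (hG : _root_.IsCompleteMultipartite G) {a b : V}
    (hab : G.Adj a b) (x : V) : G.Adj x a ∨ G.Adj x b := by
  obtain ⟨s, hs⟩ := hG
  rw [hs, hs, ← not_and_or]
  rintro ⟨hxa, hxb⟩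
  exact (hs a b).mp hab (s.trans (s.symm hxa) hxb)

lemma isCycleEmb_of_seq {N : ℕ} {h : ℕ → V} (hN : 3 ≤ N) (hinj : Set.InjOn h (Set.Iio N))
    (hstep : ∀ i, i + 1 < N → G.Adj (h i) (h (i + 1))) (hclose : G.Adj (h (N - 1)) (h 0)) :
    IsCycleEmb G N (fun j => h j.val) := by
  have : NeZero N := ⟨by omega⟩
  have : Fact (1 < N) := ⟨by omega⟩
  refine ⟨hN, fun i j hij => ZMod.val_injective N (hinj i.val_lt j.val_lt hij), fun j => ?_⟩
  simp only [ZMod.val_add, ZMod.val_one]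
  by_cases hlt : j.val + 1 < N
  · rw [Nat.mod_eq_of_lt hlt]
    exact hstep _ hlt
  · have hj : j.val = N - 1 := by have := j.val_lt; omega
    rwa [hj, Nat.sub_add_cancel (by omega), Nat.mod_self]

lemma IsCycleEmb.extend {n m : ℕ} {f : ZMod n → V} (hf : IsCycleEmb G n f) {p : ℕ → V}
    (hm : 0 < m) (hp : Set.InjOn p (Set.Iio m)) (hpf : ∀ i < m, p i ∉ Set.range f)
    (hpath : ∀ i, i + 1 < m → G.Adj (p i) (p (i + 1)))
    (hfirst : G.Adj (f (-1)) (p 0)) (hlast : G.Adj (p (m - 1)) (f 0)) :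
    ∃ g : ZMod (n + m) → V, IsCycleEmb G (n + m) g := by
  obtain ⟨hn, hfinj, hfadj⟩ := hf
  have hf_injOn : ∀ {i j : ℕ}, i < n → j < n → f i = f j → i = j := fun hi hj hij => by
    simpa [ZMod.val_cast_of_lt hi, ZMod.val_cast_of_lt hj] using congrArg ZMod.val (hfinj hij)
  let h : ℕ → V := fun i => if i < n then f i else p (i - n)
  refine ⟨_, isCycleEmb_of_seq (h := h) (by omega) ?_ ?_ ?_⟩
  · intro i hi j hj hij
    simp only [Set.mem_Iio] at hi hj
    by_cases hin : i < n <;> by_cases hjn : j < n <;>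
      simp only [h, hin, hjn, if_true, if_false] at hij
    · exact hf_injOn hin hjn hij
    · exact (hpf _ (by omega) ⟨_, hij⟩).elim
    · exact (hpf _ (by omega) ⟨_, hij.symm⟩).elim
    · have := hp (by simp only [Set.mem_Iio]; omega) (by simp only [Set.mem_Iio]; omega) hij
      omega
  · intro i hi
    rcases lt_trichotomy (i + 1) n with hlt | heq | hgt
    · simp only [h, hlt, Nat.lt_of_succ_lt hlt, if_true, Nat.cast_add, Nat.cast_one]
      exact hfadj i
    · have hi_neg : (i : ZMod n) = -1 :=
        eq_neg_of_add_eq_zero_left (by rw [← Nat.cast_add_one, heq, ZMod.natCast_self])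
      simp only [h, show i < n by omega, heq, lt_irrefl, if_true, if_false, Nat.sub_self, hi_neg]
      exact hfirst
    · simp only [h, show ¬ i < n by omega, show ¬ i + 1 < n by omega, if_false,
        show i + 1 - n = i - n + 1 by omega]
      exact hpath _ (by omega)
  · simp only [h, show ¬ n + m - 1 < n by omega, show 0 < n by omega, if_true, if_false,
      show n + m - 1 - n = m - 1 by omega, Nat.cast_zero]
    exact hlast

theorem IsLongestCycle.isDominatingCycle {n : ℕ} {f : ZMod n → V} (hf : IsLongestCycle G n f)
    (hG : ∀ a b x, G.Adj a b → G.Adj x a ∨ G.Adj x b) : IsDominatingCycle G n f := by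
  obtain ⟨hcyc, hlong⟩ := hf
  refine ⟨hcyc, fun a b hab => ?_⟩
  by_contra! ⟨ha, hb⟩
  have insert_one : ∀ v ∉ Set.range f, G.Adj (f (-1)) v → G.Adj v (f 0) → False := by
    intro v hv h₁ h₂
    obtain ⟨g, hg⟩ := hcyc.extend (p := fun _ => v) (m := 1) one_pos
      (fun i hi j hj _ => by simp only [Set.mem_Iio] at hi hj; omega) (fun _ _ => hv)
      (fun i hi => by omega) h₁ h₂
    have := hlong _ g hg
    omega
  have insert_two : ∀ u ∉ Set.range f, ∀ v ∉ Set.range f, G.Adj (f (-1)) u → G.Adj u v →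
      G.Adj v (f 0) → False := by
    intro u hu v hv h₁ h₂ h₃
    obtain ⟨g, hg⟩ := hcyc.extend (p := fun i => if i = 0 then u else v) (m := 2) two_pos
      (fun i hi j hj hij => by
        simp only [Set.mem_Iio] at hi hj
        interval_cases i <;> interval_cases j <;> simp_all [h₂.ne])
      (fun i _ => by split_ifs <;> assumption) (fun i hi => by
        obtain rfl : i = 0 := by omega
        simpa using h₂) (by simpa using h₁) (by simpa using h₃)
    have := hlong _ g hg
    omega
  rcases hG a b (f (-1)) hab with hxa | hxb <;>
    rcases hG a b (f 0) hab with hya | hyb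
  · exact insert_one a ha hxa hya.symm
  · exact insert_two a ha b hb hxa hab hyb.symm
  · exact insert_two b hb a ha hxb hab.symm hya.symm
  · exact insert_one b hb hxb hyb.symm

end

theorem stmt6_general {V : Type*} (G : SimpleGraph V) (hcm : _root_.IsCompleteMultipartite G) :
    ∀ (n : ℕ) (f : ZMod n → V), IsLongestCycle G n f →
      ¬ ∃ a b : V, G.Adj a b ∧ a ∉ Set.range f ∧ b ∉ Set.range f := by
  rintro n f hf ⟨a, b, hab, ha, hb⟩
  exact ((hf.isDominatingCycle fun _ _ x hab => hcm.adj_or_adj hab x).2 a b hab).elim ha hb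

/-- In a 2-connected complete multipartite graph (with at least two parts, i.e. with an
edge), every longest cycle is dominating: no edge has both endpoints off the cycle. -/
theorem stmt6 {V : Type*} [Fintype V] (G : SimpleGraph V)
    (h2 : TwoConnected G) (hcm : _root_.IsCompleteMultipartite G)
    (hedge : ∃ a b : V, G.Adj a b) :
    ∀ (n : ℕ) (f : ZMod n → V), IsLongestCycle G n f →
      ¬ ∃ a b : V, G.Adj a b ∧ a ∉ Set.range f ∧ b ∉ Set.range f :=
  stmt6_general G hcm
end

section
/- For each s ≥ 3, the graph A′_s = 2K₁ + sK₂ (the join of two isolated vertices with s disjoint edges) is 2-connected and contains no dominating cycle. -/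
open SimpleGraph

lemma ap_adj_lr (s : ℕ) (i : Fin 2) (x : Fin s × Fin 2) :
    (APrime s).Adj (Sum.inl i) (Sum.inr x) := by
  simp only [APrime, SimpleGraph.fromRel_adj]
  exact ⟨by simp, Or.inl (Or.inl ⟨i, x, rfl, rfl⟩)⟩

lemma ap_adj_rr (s : ℕ) (j j' : Fin s) (k k' : Fin 2) :
    (APrime s).Adj (Sum.inr (j,k)) (Sum.inr (j',k')) ↔ j = j' ∧ k ≠ k' := by
  simp only [APrime, SimpleGraph.fromRel_adj]
  constructor
  · rintro ⟨hne, h | h⟩ <;> rcases h with (⟨i,x,h1,h2⟩|⟨j0,h1,h2⟩) <;> simp_all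
  · rintro ⟨rfl, hk⟩
    fin_cases k <;> fin_cases k'
    · simp at hk
    · exact ⟨by simp, Or.inl (Or.inr ⟨j, rfl, rfl⟩)⟩
    · exact ⟨by simp, Or.inr (Or.inr ⟨j, rfl, rfl⟩)⟩
    · simp at hk

lemma ap_conn (s : ℕ) (v : Fin 2 ⊕ Fin s × Fin 2) :
    ((APrime s).induce ({v}ᶜ : Set (Fin 2 ⊕ Fin s × Fin 2))).Connected := by
  obtain (t | ⟨j, k⟩) := v
  · have hhub : (Sum.inl (t+1) : Fin 2 ⊕ Fin s × Fin 2) ∈ ({Sum.inl t}ᶜ : Set _) := by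
      simp only [Set.mem_compl_iff, Set.mem_singleton_iff]
      intro h; injection h with h; exact absurd h (by fin_cases t <;> decide)
    rw [SimpleGraph.connected_iff_exists_forall_reachable]
    refine ⟨⟨_, hhub⟩, ?_⟩
    rintro ⟨(u | x), hu⟩
    · have : u = t + 1 := by
        have : u ≠ t := by simpa using hu
        fin_cases u <;> fin_cases t <;> simp_all
      subst this; rfl
    · exact SimpleGraph.Adj.reachable (by exact ap_adj_lr s (t+1) x)
  · rw [SimpleGraph.connected_iff_exists_forall_reachable]
    have h0 : (Sum.inl 0 : Fin 2 ⊕ Fin s × Fin 2) ∈ ({Sum.inr (j,k)}ᶜ : Set _) := by simp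
    refine ⟨⟨_, h0⟩, ?_⟩
    rintro ⟨(u | ⟨j', k'⟩), hu⟩
    · fin_cases u
      · rfl
      · have hmid : (Sum.inr (j, k+1) : Fin 2 ⊕ Fin s × Fin 2) ∈ ({Sum.inr (j,k)}ᶜ : Set _) := by
          simp only [Set.mem_compl_iff, Set.mem_singleton_iff]
          intro h
          have : k + 1 = k := by injection h with h; exact congrArg Prod.snd h
          exact absurd this (by fin_cases k <;> decide)
        have r1 : ((APrime s).induce _).Reachable ⟨Sum.inl 0, h0⟩ ⟨Sum.inr (j, k+1), hmid⟩ :=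
          SimpleGraph.Adj.reachable (by exact ap_adj_lr s 0 (j, k+1))
        have r2 : ((APrime s).induce _).Reachable ⟨Sum.inr (j, k+1), hmid⟩ ⟨Sum.inl 1, hu⟩ :=
          SimpleGraph.Adj.reachable (by exact (ap_adj_lr s 1 (j, k+1)).symm)
        exact r1.trans r2
    · exact SimpleGraph.Adj.reachable (by exact ap_adj_lr s 0 (j', k'))

/-- For `s ≥ 3`, the graph `A′_s = 2K₁ + sK₂` is 2-connected and has no dominating
cycle. -/
theorem stmt9 (s : ℕ) (hs : 3 ≤ s) :
    TwoConnected (APrime s) ∧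
      ¬ ∃ (n : ℕ) (f : ZMod n → (Fin 2 ⊕ Fin s × Fin 2)),
        IsDominatingCycle (APrime s) n f := by
  constructor
  · refine ⟨?_, fun v => ap_conn s v⟩
    simp only [Nat.card_eq_fintype_card, Fintype.card_sum, Fintype.card_prod, Fintype.card_fin]
    omega
  · rintro ⟨n, f, ⟨⟨hn3, hinj, hadj⟩, hdom⟩⟩
    have hcov : ∀ j : Fin s, ∃ (i : ZMod n) (k : Fin 2), f i = Sum.inr (j, k) := by
      intro j
      rcases hdom _ _ ((ap_adj_rr s j j 0 1).2 ⟨rfl, by decide⟩) with ⟨i, hi⟩ | ⟨i, hi⟩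
      · exact ⟨i, 0, hi⟩
      · exact ⟨i, 1, hi⟩
    have key : ∀ j : Fin s, ∃ (i : ZMod n) (t : Fin 2) (k : Fin 2),
        f i = Sum.inr (j, k) ∧ f (i+1) = Sum.inl t := by
      intro j
      obtain ⟨i, k, hi⟩ := hcov j
      cases h2 : f (i+1) with
      | inl t => exact ⟨i, t, k, hi, h2⟩
      | inr x =>
        obtain ⟨j1, k1⟩ := x
        have a1 := hadj i
        rw [hi, h2] at a1
        obtain ⟨hj1, hk1⟩ := (ap_adj_rr s j j1 k k1).1 a1
        subst hj1
        cases h4 : f (i+1+1) with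
        | inl t => exact ⟨i+1, t, k1, h2, h4⟩
        | inr y =>
          obtain ⟨j2, k2⟩ := y
          have a2 := hadj (i+1)
          rw [h2, h4] at a2
          obtain ⟨hj2, hk2⟩ := (ap_adj_rr s j j2 k1 k2).1 a2
          subst hj2
          have hkk : k2 = k := by fin_cases k <;> fin_cases k1 <;> fin_cases k2 <;> simp_all
          have heq : f (i+1+1) = f i := by rw [h4, hi, hkk]
          have e := hinj heq
          have e2 : (2 : ZMod n) = 0 := by
            have : i + (1 + 1) = i + 0 := by rw [← add_assoc, e, add_zero]
            have := add_left_cancel this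
            norm_num at this ⊢
            exact this
          exfalso
          have hchar : ((2:ℕ) : ZMod n) = 0 := by exact_mod_cast e2
          haveI := ZMod.charP n
          have hdvd : n ∣ 2 := (CharP.cast_eq_zero_iff (ZMod n) n 2).1 hchar
          have := Nat.le_of_dvd (by norm_num) hdvd
          omega
    choose i T k h1 h2 using key
    have hTinj : Function.Injective T := by
      intro j j' h
      have hf : f (i j + 1) = f (i j' + 1) := by rw [h2 j, h2 j', h]
      have hii : i j = i j' := add_right_cancel (hinj hf)
      have := h1 j
      rw [hii, h1 j'] at this
      injection this with h'
      exact (congrArg Prod.fst h').symm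
    have hcard := Fintype.card_le_of_injective T hTinj
    simp at hcard
    omega
end

section
/- For each s ≥ 2, the graph A″_s = K₂ + (2K₂ ∪ K_s), the join of an edge with the disjoint union of two edges and a complete graph on s vertices, is 2-connected and contains no dominating cycle. -/
open SimpleGraph

/-!
Deleting the two universal vertices of `A″_s` leaves three components, each containing an
edge, so a dominating cycle must visit all three. Each visit to a component ends with a step
to one of the two deleted vertices, and by injectivity distinct components end in distinct
such vertices: three exits into two vertices is impossible.
-/

open SimpleGraph Function

theorem ZMod.exists_and_not_add_one {n : ℕ} [NeZero n] {p : ZMod n → Prop}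
    (h : ∃ j, p j) (h' : ∃ j, ¬ p j) : ∃ i, p i ∧ ¬ p (i + 1) := by
  obtain ⟨j, hj⟩ := h
  obtain ⟨j', hj'⟩ := h'
  by_contra! hstep
  have hall : ∀ k : ℕ, p (j + k) := by
    intro k
    induction k with
    | zero => simpa using hj
    | succ k ih => simpa [add_assoc] using hstep _ ih
  exact hj' (by simpa using hall (j' - j).val)

theorem SimpleGraph.induce_connected_of_forall_adj {V : Type*} {G : SimpleGraph V} {S : Set V}
    {v : V} (hv : v ∈ S) (hadj : ∀ w ∈ S, v ≠ w → G.Adj v w) : (G.induce S).Connected := by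
  have : Nonempty S := ⟨⟨v, hv⟩⟩
  refine (connected_iff_exists_forall_reachable _).2 ⟨⟨v, hv⟩, fun ⟨w, hw⟩ => ?_⟩
  by_cases h : v = w
  · subst h
    rfl
  · exact Adj.reachable (by simpa using hadj w hw h)

section Cycles

variable {V : Type*} {G : SimpleGraph V} {n : ℕ} {f : ZMod n → V}

theorem IsCycleEmb.exists_mem_and_add_one_mem (hf : IsCycleEmb G n f) {S P : Set V}
    (hP : ∀ a ∈ P, ∀ b, G.Adj a b → b ∉ S → b ∈ P)
    (hin : ∃ j, f j ∈ P) (hout : ∃ j, f j ∉ P) : ∃ i, f i ∈ P ∧ f (i + 1) ∈ S := by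
  have : NeZero n := ⟨by have := hf.1; omega⟩
  obtain ⟨i, hi, hi'⟩ := ZMod.exists_and_not_add_one hin hout
  exact ⟨i, hi, by_contra fun hS => hi' (hP _ hi _ (hf.2.2 i) hS)⟩

/-- A cycle meeting several components of `G - S` leaves each of them through a different
vertex of `S`. -/
theorem IsCycleEmb.card_le_of_pairwise_disjoint {ι : Type*} [Nontrivial ι]
    (hf : IsCycleEmb G n f) {S : Set V} [Finite S] {P : ι → Set V}
    (hdisj : Pairwise (Disjoint on P)) (hP : ∀ k, ∀ a ∈ P k, ∀ b, G.Adj a b → b ∉ S → b ∈ P k)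
    (hmeet : ∀ k, ∃ j, f j ∈ P k) : Nat.card ι ≤ Nat.card S := by
  have hexit : ∀ k, ∃ i, f i ∈ P k ∧ f (i + 1) ∈ S := fun k => by
    obtain ⟨k', hk'⟩ := exists_ne k
    obtain ⟨j, hj⟩ := hmeet k'
    exact hf.exists_mem_and_add_one_mem (hP k) (hmeet k)
      ⟨j, Set.disjoint_left.mp (hdisj hk') hj⟩
  choose e he hS using hexit
  refine Nat.card_le_card_of_injective (fun k => ⟨f (e k + 1), hS k⟩) fun k k' h => ?_
  have hee : e k = e k' := add_right_cancel (hf.2.1 (Subtype.ext_iff.mp h))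
  by_contra hne
  exact Set.disjoint_left.mp (hdisj hne) (he k) (hee ▸ he k')

theorem IsDominatingCycle.card_le_of_pairwise_disjoint {ι : Type*} [Nontrivial ι]
    (hf : IsDominatingCycle G n f) {S : Set V} [Finite S] {P : ι → Set V}
    (hdisj : Pairwise (Disjoint on P)) (hP : ∀ k, ∀ a ∈ P k, ∀ b, G.Adj a b → b ∉ S → b ∈ P k)
    (hedge : ∀ k, ∃ a ∈ P k, ∃ b ∈ P k, G.Adj a b) : Nat.card ι ≤ Nat.card S :=
  hf.1.card_le_of_pairwise_disjoint hdisj hP fun k => by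
    obtain ⟨a, ha, b, hb, hab⟩ := hedge k
    rcases hf.2 a b hab with ⟨j, rfl⟩ | ⟨j, rfl⟩
    exacts [⟨j, ha⟩, ⟨j, hb⟩]

end Cycles

namespace ADoublePrime

variable {s : ℕ}

theorem adj_inl (i : Fin 2) {v : Fin 2 ⊕ (Fin 2 × Fin 2 ⊕ Fin s)} (h : Sum.inl i ≠ v) :
    (ADoublePrime s).Adj (Sum.inl i) v := by
  rw [ADoublePrime, fromRel_adj]
  exact ⟨h, Or.inl (Or.inl ⟨i, rfl⟩)⟩

theorem adj_pair (j : Fin 2) :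
    (ADoublePrime s).Adj (Sum.inr (Sum.inl (j, 0))) (Sum.inr (Sum.inl (j, 1))) := by
  rw [ADoublePrime, fromRel_adj]
  exact ⟨by simp, Or.inl (Or.inr (Or.inl ⟨j, rfl, rfl⟩))⟩

theorem adj_clique {p q : Fin s} (h : p ≠ q) :
    (ADoublePrime s).Adj (Sum.inr (Sum.inr p)) (Sum.inr (Sum.inr q)) := by
  rw [ADoublePrime, fromRel_adj]
  exact ⟨by simpa using h, Or.inl (Or.inr (Or.inr ⟨p, q, rfl, rfl⟩))⟩

theorem twoConnected : TwoConnected (ADoublePrime s) := by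
  refine ⟨by simp; omega, fun v => ?_⟩
  by_cases h0 : v = Sum.inl 0
  · exact induce_connected_of_forall_adj (v := Sum.inl 1) (by simp [h0])
      fun w _ h => adj_inl 1 h
  · exact induce_connected_of_forall_adj (v := Sum.inl 0) (Ne.symm h0)
      fun w _ h => adj_inl 0 h

def piece : Fin 2 × Fin 2 ⊕ Fin s → Fin 3
  | .inl (j, _) => j.castSucc
  | .inr _ => 2

def component (k : Fin 3) : Set (Fin 2 ⊕ (Fin 2 × Fin 2 ⊕ Fin s)) :=
  Sum.inr '' {w | piece w = k}

theorem piece_eq_of_adj {w w' : Fin 2 × Fin 2 ⊕ Fin s}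
    (h : (ADoublePrime s).Adj (Sum.inr w) (Sum.inr w')) : piece w = piece w' := by
  rw [ADoublePrime, fromRel_adj] at h
  obtain ⟨-, h | h⟩ := h <;>
    rcases h with ⟨i, h⟩ | ⟨j, h, h'⟩ | ⟨p, q, h, h'⟩ <;> simp_all [piece]

theorem pairwise_disjoint_component : Pairwise (Disjoint on @component s) := by
  intro k k' hne
  rw [Function.onFun, Set.disjoint_left]
  rintro _ ⟨w, hw, rfl⟩ ⟨w', hw', hww'⟩
  exact hne (hw.symm.trans (Sum.inr_injective hww' ▸ hw'))

theorem mem_component_of_adj (k : Fin 3) :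
    ∀ a ∈ component k, ∀ b, (ADoublePrime s).Adj a b → b ∉ Set.range Sum.inl →
      b ∈ component k := by
  rintro _ ⟨w, hw, rfl⟩ (b | w') hab hb
  · exact absurd ⟨b, rfl⟩ hb
  · exact ⟨w', (piece_eq_of_adj hab).symm.trans hw, rfl⟩

theorem exists_adj_component (hs : 2 ≤ s) (k : Fin 3) :
    ∃ a ∈ component (s := s) k, ∃ b ∈ component k, (ADoublePrime s).Adj a b := by
  fin_cases k
  · exact ⟨_, ⟨.inl (0, 0), rfl, rfl⟩, _, ⟨.inl (0, 1), rfl, rfl⟩, adj_pair 0⟩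
  · exact ⟨_, ⟨.inl (1, 0), rfl, rfl⟩, _, ⟨.inl (1, 1), rfl, rfl⟩, adj_pair 1⟩
  · exact ⟨_, ⟨.inr ⟨0, by omega⟩, rfl, rfl⟩, _, ⟨.inr ⟨1, by omega⟩, rfl, rfl⟩,
      adj_clique (by simp)⟩

theorem not_isDominatingCycle (hs : 2 ≤ s) (n : ℕ)
    (f : ZMod n → Fin 2 ⊕ (Fin 2 × Fin 2 ⊕ Fin s)) : ¬ IsDominatingCycle (ADoublePrime s) n f := by
  intro hf
  have h := IsDominatingCycle.card_le_of_pairwise_disjoint hf (S := Set.range Sum.inl)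
    pairwise_disjoint_component mem_component_of_adj (exists_adj_component hs)
  rw [Nat.card_range_of_injective Sum.inl_injective] at h
  simp at h

end ADoublePrime

/-- For `s ≥ 2`, the graph `A″_s = K₂ + (2K₂ ∪ K_s)` is 2-connected and has no
dominating cycle. -/
theorem stmt10 (s : ℕ) (hs : 2 ≤ s) :
    TwoConnected (ADoublePrime s) ∧
      ¬ ∃ (n : ℕ) (f : ZMod n → (Fin 2 ⊕ (Fin 2 × Fin 2 ⊕ Fin s))),
        IsDominatingCycle (ADoublePrime s) n f :=
  ⟨ADoublePrime.twoConnected, fun ⟨n, f, hf⟩ => ADoublePrime.not_isDominatingCycle hs n f hf⟩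
end

section
/- For s ≥ 3, the complete bipartite-like graph A_s⁽⁵⁾ defined on vertices {x₁, x₂} ∪ {y_{i,j} : 1 ≤ i ≤ 2, 1 ≤ j ≤ s} with edges x₁x₂, all y_{1,j}y_{2,j}, and all x_i y_{i,j}, is triangle-free, 2-connected, and contains no dominating cycle. -/
open SimpleGraph

/-!
`A_s⁽⁵⁾` is bipartite (with sides `{x₁, y_{2,j}}` and `{x₂, y_{1,j}}`), hence
triangle-free. After deleting any vertex, every remaining vertex is within distance two of `x₁`
or `x₂`, which gives 2-connectivity. A dominating cycle must contain an end of each edge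
`y_{1,j} y_{2,j}`; a vertex `y_{i,j}` has degree two, so the cycle then passes through both of
its neighbours, hence through every `y_{1,j}`, each of which must be cycle-adjacent to `x₁`.
But `x₁` has only two neighbours on the cycle, while `s ≥ 3`.
-/

section Cycle

variable {V : Type*} {G : SimpleGraph V} {n : ℕ} {f : ZMod n → V}

lemma IsCycleEmb.injective (hC : IsCycleEmb G n f) : Function.Injective f := hC.2.1

lemma IsCycleEmb.adj_succ (hC : IsCycleEmb G n f) (t : ZMod n) : G.Adj (f t) (f (t + 1)) :=
  hC.2.2 t

lemma IsCycleEmb.adj_pred (hC : IsCycleEmb G n f) (t : ZMod n) : G.Adj (f t) (f (t - 1)) := by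
  simpa using (hC.adj_succ (t - 1)).symm

lemma IsCycleEmb.succ_ne_pred (hC : IsCycleEmb G n f) (t : ZMod n) : f (t + 1) ≠ f (t - 1) := by
  intro h
  have h2 : ((2 : ℕ) : ZMod n) = 0 := by
    push_cast
    linear_combination hC.injective h
  have := Nat.le_of_dvd two_pos ((ZMod.natCast_eq_zero_iff 2 n).1 h2)
  have := hC.1
  omega

lemma IsCycleEmb.succ_eq_or_pred_eq_of_forall_adj (hC : IsCycleEmb G n f) {t : ZMod n}
    {a b : V} (hN : ∀ w, G.Adj (f t) w → w = a ∨ w = b) : f (t + 1) = a ∨ f (t - 1) = a := by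
  have hne := hC.succ_ne_pred t
  rcases hN _ (hC.adj_succ t) with h₁ | h₁ <;> rcases hN _ (hC.adj_pred t) with h₂ | h₂ <;>
    simp_all

end Cycle

lemma SimpleGraph.induce_connected_of_forall_eq_or_adj_or_adj_adj {V : Type*}
    {G : SimpleGraph V} {S : Set V} {c : V} (hc : c ∈ S)
    (h : ∀ u ∈ S, u = c ∨ G.Adj u c ∨ ∃ w ∈ S, G.Adj u w ∧ G.Adj w c) :
    (G.induce S).Connected := by
  rw [connected_iff_exists_forall_reachable]
  refine ⟨⟨c, hc⟩, fun ⟨u, hu⟩ => ?_⟩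
  rcases h u hu with rfl | huc | ⟨w, hw, huw, hwc⟩
  · rfl
  · exact (show (G.induce S).Adj ⟨u, hu⟩ ⟨c, hc⟩ from huc).reachable.symm
  · exact ((show (G.induce S).Adj ⟨u, hu⟩ ⟨w, hw⟩ from huw).reachable.trans
      (show (G.induce S).Adj ⟨w, hw⟩ ⟨c, hc⟩ from hwc).reachable).symm

section AFive

variable {s : ℕ}

@[simp]
lemma aFive_adj_inl_inl {a b : Fin 2} : (AFive s).Adj (.inl a) (.inl b) ↔ a ≠ b := by
  fin_cases a <;> fin_cases b <;> simp [AFive]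

@[simp]
lemma aFive_adj_inl_inr {a i : Fin 2} {j : Fin s} :
    (AFive s).Adj (.inl a) (.inr (i, j)) ↔ a = i := by
  fin_cases a <;> fin_cases i <;> simp [AFive]

@[simp]
lemma aFive_adj_inr_inl {a i : Fin 2} {j : Fin s} :
    (AFive s).Adj (.inr (i, j)) (.inl a) ↔ i = a := by
  rw [adj_comm, aFive_adj_inl_inr, eq_comm]

@[simp]
lemma aFive_adj_inr_inr {i i' : Fin 2} {j j' : Fin s} :
    (AFive s).Adj (.inr (i, j)) (.inr (i', j')) ↔ i ≠ i' ∧ j = j' := by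
  fin_cases i <;> fin_cases i' <;> simp [AFive, eq_comm]

lemma aFive_eq_or_eq_of_adj_inr {i : Fin 2} {j : Fin s} {w : Fin 2 ⊕ Fin 2 × Fin s}
    (h : (AFive s).Adj (.inr (i, j)) w) : w = .inl i ∨ w = .inr (1 - i, j) := by
  rcases w with a | ⟨i', j'⟩
  · simp_all
  · fin_cases i <;> fin_cases i' <;> simp_all

lemma aFive_colorable_two : (AFive s).Colorable 2 :=
  ⟨Coloring.mk (Sum.elim id fun y => 1 - y.1) fun {v w} h => by
    rcases v with a | ⟨i, j⟩ <;> rcases w with b | ⟨i', j'⟩ <;> simp_all <;> omega⟩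

lemma aFive_twoConnected (hs : 1 ≤ s) : TwoConnected (AFive s) := by
  refine ⟨by simp [Nat.card_eq_fintype_card]; omega, fun v => ?_⟩
  rcases v with a | ⟨i₀, j₀⟩
  · refine induce_connected_of_forall_eq_or_adj_or_adj_adj (c := .inl (1 - a))
      (by fin_cases a <;> simp) fun u hu => ?_
    rcases u with b | ⟨i, j⟩
    · fin_cases a <;> fin_cases b <;> simp_all
    · by_cases hi : i = 1 - a
      · simp [hi]
      · exact Or.inr (Or.inr ⟨.inr (1 - a, j), by simp, by simpa, by simp⟩)
  · refine induce_connected_of_forall_eq_or_adj_or_adj_adj (c := .inl 0) (by simp)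
      fun u _ => ?_
    rcases u with b | ⟨i, j⟩
    · fin_cases b <;> simp
    · by_cases hi : i = 0
      · simp [hi]
      · exact Or.inr (Or.inr ⟨.inl i, by simp, by simp, by simpa⟩)

lemma aFive_not_isDominatingCycle (hs : 3 ≤ s) (n : ℕ)
    (f : ZMod n → Fin 2 ⊕ Fin 2 × Fin s) : ¬ IsDominatingCycle (AFive s) n f := by
  rintro ⟨hC, hdom⟩
  have hy : ∀ j : Fin s, ∃ t, f t = .inr (0, j) := by
    intro j
    rcases hdom _ _ (show (AFive s).Adj (.inr (0, j)) (.inr (1, j)) by simp) with h | ⟨t, ht⟩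
    · exact h
    · have := hC.succ_eq_or_pred_eq_of_forall_adj (a := .inr (0, j)) (b := .inl 1) fun w hw => by
        rw [ht] at hw; simpa [or_comm] using aFive_eq_or_eq_of_adj_inr hw
      exact this.elim (⟨_, ·⟩) (⟨_, ·⟩)
  choose p hp using hy
  have hx : ∀ j, f (p j + 1) = .inl 0 ∨ f (p j - 1) = .inl 0 := fun j =>
    hC.succ_eq_or_pred_eq_of_forall_adj (b := .inr (1, j)) fun w hw => by
      rw [hp] at hw; simpa using aFive_eq_or_eq_of_adj_inr hw
  obtain ⟨t₀, ht₀⟩ : ∃ t₀, f t₀ = .inl 0 :=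
    (hx ⟨0, by omega⟩).elim (⟨_, ·⟩) (⟨_, ·⟩)
  have hmem : ∀ j ∈ Finset.univ, p j ∈ ({t₀ - 1, t₀ + 1} : Finset (ZMod n)) := by
    intro j _
    rcases hx j with h | h <;> have := hC.injective (h.trans ht₀.symm) <;>
      simp [← this]
  have hinj : Set.InjOn p (Finset.univ : Finset (Fin s)) := fun j _ j' _ h => by
    have := (hp j).symm.trans (h ▸ hp j')
    simpa using this
  have := (Finset.card_le_card_of_injOn p hmem hinj).trans Finset.card_le_two
  rw [Finset.card_univ, Fintype.card_fin] at this
  omega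

end AFive

/-- For `s ≥ 3`, the graph `A_s⁽⁵⁾` is triangle-free, 2-connected, and has no
dominating cycle. -/
theorem stmt13 (s : ℕ) (hs : 3 ≤ s) :
    (AFive s).CliqueFree 3 ∧ TwoConnected (AFive s) ∧
      ¬ ∃ (n : ℕ) (f : ZMod n → (Fin 2 ⊕ Fin 2 × Fin s)),
        IsDominatingCycle (AFive s) n f :=
  ⟨aFive_colorable_two.cliqueFree (by norm_num), aFive_twoConnected (by omega),
    fun ⟨n, f, hf⟩ => aFive_not_isDominatingCycle hs n f hf⟩
end

section
/- Let G be a 2-connected {P₄, W}-free graph with |V(G)| ≥ 4, and let {A, B} be a partition of V(G) with |A| ≥ |B| ≥ 2 such that every vertex of A is adjacent to every vertex of B. If C is a longest cycle of G, then B ⊆ V(C). -/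
/-!
Alternating between `A` and `B` gives a cycle of length `2|B|`, so a longest cycle `C` has at
least `2|B|` vertices. If some `b ∈ B` missed `C`, no two consecutive vertices of `C` could lie in
`A`, since `b` could be inserted between them. Hence at least half of the vertices of `C` lie in
`B \ {b}`, and `|C| ≤ 2(|B| - 1)`.
-/

open SimpleGraph

theorem Set.exists_fin_embedding_of_le_ncard {α : Type*} {s : Set α} {k : ℕ} (hs : s.Finite)
    (hk : k ≤ s.ncard) : ∃ e : Fin k ↪ α, ∀ i, e i ∈ s := by
  obtain ⟨m, f, rfl⟩ := hs.fin_embedding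
  rw [Set.ncard_range_of_injective f.injective, Nat.card_eq_fintype_card, Fintype.card_fin] at hk
  exact ⟨(Fin.castLEEmb hk).trans f, fun i => Set.mem_range_self _⟩

theorem ZMod.le_two_mul_ncard_compl_of_add_one_notMem {n : ℕ} {s : Set (ZMod n)}
    (hs : ∀ i ∈ s, i + 1 ∉ s) : n ≤ 2 * sᶜ.ncard := by
  rcases Nat.eq_zero_or_pos n with rfl | hn
  · exact Nat.zero_le _
  have := NeZero.of_pos hn
  have hle : s.ncard ≤ sᶜ.ncard :=
    Set.ncard_le_ncard_of_injOn (· + 1) hs (add_left_injective 1).injOn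
  have hsum : s.ncard + sᶜ.ncard = n := by rw [Set.ncard_add_ncard_compl, Nat.card_zmod]
  omega

section

variable {V : Type*} {G : SimpleGraph V}

theorem isCycleEmb_of_nat {n : ℕ} (hn : 3 ≤ n) (g : ℕ → V) (hinj : Set.InjOn g (Set.Iio n))
    (hadj : ∀ m, m + 1 < n → G.Adj (g m) (g (m + 1))) (hclose : G.Adj (g (n - 1)) (g 0)) :
    IsCycleEmb G n (fun i => g i.val) := by
  have : NeZero n := ⟨by omega⟩
  have : Fact (1 < n) := ⟨by omega⟩
  refine ⟨hn, fun i j hij => ZMod.val_injective n (hinj i.val_lt j.val_lt hij), fun i => ?_⟩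
  by_cases hi : i.val + 1 < n
  · have : (i + 1).val = i.val + 1 := by
      rw [ZMod.val_add_of_lt (by rwa [ZMod.val_one]), ZMod.val_one]
    simpa only [this] using hadj _ hi
  · have hval : i.val = n - 1 := by have := i.val_lt; omega
    have : i + 1 = 0 := by
      rw [← ZMod.natCast_zmod_val i, hval, ← Nat.cast_add_one, Nat.sub_add_cancel (by omega),
        ZMod.natCast_self]
    simpa only [this, hval, ZMod.val_zero] using hclose

theorem IsCycleEmb.exists_succ_of_adj_of_notMem_range {n : ℕ} {f : ZMod n → V}
    (hf : IsCycleEmb G n f) {b : V} (hb : b ∉ Set.range f) {i : ZMod n}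
    (h₁ : G.Adj (f i) b) (h₂ : G.Adj b (f (i + 1))) :
    ∃ g : ZMod (n + 1) → V, IsCycleEmb G (n + 1) g := by
  obtain ⟨hn, hinj, hadj⟩ := hf
  have : NeZero n := ⟨by omega⟩
  -- run around `C` from `f (i + 1)` to `f i`, then close up through `b`
  let g : ℕ → V := fun m => if m < n then f (i + 1 + m) else b
  refine ⟨_, isCycleEmb_of_nat (by omega) g ?_ ?_ ?_⟩
  · intro m hm m' hm' hmm'
    simp only [Set.mem_Iio] at hm hm'
    simp only [g] at hmm'
    split_ifs at hmm' with h h'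
    · have := congrArg ZMod.val (add_left_cancel (hinj hmm'))
      rwa [ZMod.val_cast_of_lt h, ZMod.val_cast_of_lt h'] at this
    · exact (hb ⟨_, hmm'⟩).elim
    · exact (hb ⟨_, hmm'.symm⟩).elim
    · omega
  · intro m hm
    have hm' : m < n := by omega
    simp only [g, if_pos hm']
    by_cases h : m + 1 < n
    · rw [if_pos h, Nat.cast_add_one, ← add_assoc]
      exact hadj _
    · have hwrap : i + 1 + m = i := by
        rw [add_assoc, add_comm 1, ← Nat.cast_add_one, show m + 1 = n by omega, ZMod.natCast_self,
          add_zero]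
      rwa [if_neg h, hwrap]
  · simpa [g, show 0 < n by omega] using h₂

theorem exists_isCycleEmb_of_forall_adj {A B : Set V} (hdisj : Disjoint A B)
    (hjoin : ∀ a ∈ A, ∀ b ∈ B, G.Adj a b) {k : ℕ} (hk : 2 ≤ k) (hkA : k ≤ A.ncard)
    (hkB : k ≤ B.ncard) : ∃ g : ZMod (2 * k) → V, IsCycleEmb G (2 * k) g := by
  obtain ⟨a, ha⟩ := Set.exists_fin_embedding_of_le_ncard (Set.finite_of_ncard_pos (by omega)) hkA
  obtain ⟨b, hb⟩ := Set.exists_fin_embedding_of_le_ncard (Set.finite_of_ncard_pos (by omega)) hkB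
  have : NeZero k := ⟨by omega⟩
  let g : ℕ → V := fun m => if Even m then b (Fin.ofNat k (m / 2)) else a (Fin.ofNat k (m / 2))
  refine ⟨_, isCycleEmb_of_nat (by omega) g ?_ ?_ ?_⟩
  · intro m hm m' hm' hmm'
    simp only [Set.mem_Iio] at hm hm'
    simp only [g] at hmm'
    have half : ∀ e : Fin k ↪ V, e (Fin.ofNat k (m / 2)) = e (Fin.ofNat k (m' / 2)) →
        m / 2 = m' / 2 := fun e he => by
      simpa [Nat.mod_eq_of_lt (show m / 2 < k by omega), Nat.mod_eq_of_lt (show m' / 2 < k by omega)]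
        using congrArg Fin.val (e.injective he)
    split_ifs at hmm' with h h' h' <;> rw [Nat.even_iff] at h h'
    · have := half b hmm'
      omega
    · exact (Set.disjoint_left.mp hdisj (ha _) (hmm' ▸ hb _)).elim
    · exact (Set.disjoint_left.mp hdisj (hmm' ▸ ha _) (hb _)).elim
    · have := half a hmm'
      omega
  · intro m _
    by_cases h : Even m
    · simpa [g, h, Nat.even_add_one] using (hjoin _ (ha _) _ (hb _)).symm
    · simpa [g, h, Nat.even_add_one] using hjoin _ (ha _) _ (hb _)
  · have : ¬ Even (2 * k - 1) := by grind
    simpa [g, this] using hjoin _ (ha _) _ (hb _)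

theorem IsLongestCycle.not_adj_adj_of_notMem_range {n : ℕ} {f : ZMod n → V}
    (hC : IsLongestCycle G n f) {b : V} (hb : b ∉ Set.range f) (i : ZMod n) :
    ¬ (G.Adj (f i) b ∧ G.Adj b (f (i + 1))) := by
  rintro ⟨h₁, h₂⟩
  obtain ⟨g, hg⟩ := hC.1.exists_succ_of_adj_of_notMem_range hb h₁ h₂
  have := hC.2 _ g hg
  omega

end

theorem stmt14_general {V : Type*} (G : SimpleGraph V)
    (A B : Set V) (hpart : A ∪ B = Set.univ) (hdisj : Disjoint A B)
    (hBA : B.ncard ≤ A.ncard) (hB2 : 2 ≤ B.ncard)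
    (hjoin : ∀ a ∈ A, ∀ b ∈ B, G.Adj a b)
    (n : ℕ) (f : ZMod n → V) (hC : IsLongestCycle G n f) :
    B ⊆ Set.range f := by
  intro b hb
  by_contra hbf
  obtain ⟨g, hg⟩ := exists_isCycleEmb_of_forall_adj hdisj hjoin hB2 hBA le_rfl
  have hlong : 2 * B.ncard ≤ n := hC.2 _ g hg
  have hsep : ∀ i ∈ f ⁻¹' A, i + 1 ∉ f ⁻¹' A := fun i hi hi' =>
    hC.not_adj_adj_of_notMem_range hbf i ⟨hjoin _ hi b hb, (hjoin _ hi' b hb).symm⟩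
  have hshort : n ≤ 2 * (f ⁻¹' A)ᶜ.ncard := ZMod.le_two_mul_ncard_compl_of_add_one_notMem hsep
  have hrest : (f ⁻¹' A)ᶜ.ncard ≤ (B \ {b}).ncard := by
    refine Set.ncard_le_ncard_of_injOn f (fun i hi => ⟨?_, fun h => hbf ⟨i, h⟩⟩)
      hC.1.2.1.injOn (Set.finite_of_ncard_pos (by omega)).sdiff
    exact (Set.eq_univ_iff_forall.mp hpart (f i)).resolve_left hi
  rw [Set.ncard_sdiff_singleton_of_mem hb] at hrest
  omega

/-- In a 2-connected `{P₄, W}`-free graph with `|V(G)| ≥ 4` and a complete-join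
partition `{A, B}` with `|A| ≥ |B| ≥ 2`, every longest cycle contains all of `B`. -/
theorem stmt14 {V : Type*} [Fintype V] (G : SimpleGraph V)
    (h2 : TwoConnected G) (hP4 : HFree (SimpleGraph.pathGraph 4) G) (hW : HFree Wgraph G)
    (hcard : 4 ≤ Fintype.card V)
    (A B : Set V) (hpart : A ∪ B = Set.univ) (hdisj : Disjoint A B)
    (hBA : B.ncard ≤ A.ncard) (hB2 : 2 ≤ B.ncard)
    (hjoin : ∀ a ∈ A, ∀ b ∈ B, G.Adj a b)
    (n : ℕ) (f : ZMod n → V) (hC : IsLongestCycle G n f) :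
    B ⊆ Set.range f :=
  stmt14_general G A B hpart hdisj hBA hB2 hjoin n f hC
end

section
/- Suppose H is a finite set of connected graphs such that, for some n₀, every 2-connected H-free graph of order at least n₀ has a dominating cycle. Then H contains a graph T that is a tree with maximum degree at most 3 and at most one vertex of degree 3. -/
open SimpleGraph

/-!
For `s` large, the theta graph `A_s` (two hubs joined by three paths with `s` internal vertices
each) is 2-connected, has at least `n₀` vertices and has no dominating cycle, so some member `H i`
of `H` embeds in it. Index the vertices of each path by their distance from the first hub: this
height changes by exactly one along every edge, and an internal vertex has one lower and one
higher neighbour. So the lowest and the highest vertex of any cycle are the two hubs, and the hubs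
are `s + 1` apart. A connected graph on at most `s` vertices therefore embeds with at most one hub
in its image: it is acyclic, and since internal vertices have degree 2, at most one of its
vertices has degree 3 (and none has more).
-/

namespace SimpleGraph

variable {V : Type*} {G : SimpleGraph V}

theorem Walk.le_add_length_of_forall_adj {φ : V → ℕ} (hφ : ∀ x y, G.Adj x y → φ y ≤ φ x + 1)
    {u v : V} (p : G.Walk u v) : φ v ≤ φ u + p.length := by
  induction p with
  | nil => simp
  | cons h _ ih => have := hφ _ _ h; rw [Walk.length_cons]; omega

theorem Walk.IsCycle.exists_adj_adj_le {α : Type*} [LinearOrder α] {v : V} {c : G.Walk v v}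
    (hc : c.IsCycle) (φ : V → α) :
    ∃ w ∈ c.support, ∃ x y, x ≠ y ∧ G.Adj w x ∧ G.Adj w y ∧ φ w ≤ φ x ∧ φ w ≤ φ y := by
  classical
  obtain ⟨w, hw, hmin⟩ := c.support.toFinset.exists_min_image φ ⟨v, by simp⟩
  rw [List.mem_toFinset] at hw
  have hc' := hc.rotate hw
  have hmem : ∀ i, φ w ≤ φ ((c.rotate w hw).getVert i) := fun i =>
    hmin _ (List.mem_toFinset.mpr
      ((c.mem_support_rotate_iff w hw).mp (Walk.getVert_mem_support _ i)))
  exact ⟨w, hw, _, _, hc'.snd_ne_penultimate, Walk.adj_snd hc'.not_nil,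
    (Walk.adj_penultimate hc'.not_nil).symm, hmem 1, hmem _⟩

theorem Connected.exists_walk_length_lt [Fintype V] (hG : G.Connected) (u v : V) :
    ∃ p : G.Walk u v, p.length < Fintype.card V := by
  classical
  exact ⟨(hG u v).some.toPath, (hG u v).some.toPath.property.length_lt⟩

theorem reachable_induce_of_chain {S : Set V} (f : ℕ → V) {a b : ℕ} (hab : a ≤ b)
    (hadj : ∀ i, a ≤ i → i < b → G.Adj (f i) (f (i + 1)))
    (hS : ∀ i, a ≤ i → i ≤ b → f i ∈ S) {x y : S} (hx : f a = x) (hy : f b = y) :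
    (G.induce S).Reachable x y := by
  obtain ⟨y, hyS⟩ := y
  obtain rfl : f b = y := hy
  induction b, hab using Nat.le_induction with
  | base => exact (Subtype.ext hx.symm : x = ⟨f a, hyS⟩) ▸ Reachable.rfl
  | succ b hab ih =>
    refine (ih (fun i h₁ _ => hadj i h₁ (by omega)) (fun i h₁ _ => hS i h₁ (by omega))
      (hS b hab (by omega))).trans ?_
    exact Adj.reachable (G := G.induce S) (u := ⟨f b, hS b hab (by omega)⟩)
      (v := ⟨f (b + 1), hyS⟩) (hadj b hab (by omega))

theorem Embedding.ncard_neighborSet_le {W : Type*} {G' : SimpleGraph W} (e : G ↪g G') (v : V)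
    [Finite (G'.neighborSet (e v))] : (G.neighborSet v).ncard ≤ (G'.neighborSet (e v)).ncard :=
  Set.ncard_le_ncard_of_injOn e (fun _ hw => e.map_adj_iff.mpr hw) e.injective.injOn

end SimpleGraph

theorem Set.ncard_range_le {α ι : Type*} [Finite ι] (f : ι → α) :
    (Set.range f).ncard ≤ Nat.card ι := by
  rw [← Set.image_univ, ← Set.ncard_univ]
  exact Set.ncard_image_le

namespace IsCycleEmb

variable {V : Type*} {G : SimpleGraph V} {n : ℕ} {f : ZMod n → V}

theorem apply_sub_one_ne_apply_add_one (h : IsCycleEmb G n f) (p : ZMod n) :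
    f (p - 1) ≠ f (p + 1) := by
  intro he
  have h2 : ((2 : ℕ) : ZMod n) = 0 := by
    push_cast
    linear_combination -h.2.1 he
  have := Nat.le_of_dvd two_pos ((ZMod.natCast_eq_zero_iff 2 n).mp h2)
  have := h.1
  omega

theorem apply_sub_one_eq_or_apply_add_one_eq (h : IsCycleEmb G n f) {p : ZMod n} {x y : V}
    (hnbr : ∀ b, G.Adj (f p) b → b = x ∨ b = y) : f (p - 1) = x ∨ f (p + 1) = x := by
  have hprev : G.Adj (f p) (f (p - 1)) := by simpa using (h.2.2 (p - 1)).symm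
  have hne := h.apply_sub_one_ne_apply_add_one p
  rcases hnbr _ hprev with h1 | h1 <;> rcases hnbr _ (h.2.2 p) with h2 | h2 <;> grind

end IsCycleEmb

namespace thetaGraph

variable {s : ℕ}

/-- `leg s j i` is the vertex at distance `i` from the hub `inl 0` along the `j`-th path;
every `i > s` gives the other hub `inl 1`. -/
def leg (s : ℕ) (j : Fin 3) (i : ℕ) : Fin 2 ⊕ Fin 3 × Fin s :=
  if h0 : i = 0 then .inl 0 else if h : i ≤ s then .inr (j, ⟨i - 1, by omega⟩) else .inl 1

def height : Fin 2 ⊕ Fin 3 × Fin s → ℕ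
  | .inl a => a * (s + 1)
  | .inr (_, k) => k + 1

@[simp] theorem leg_zero (j : Fin 3) : leg s j 0 = .inl 0 := rfl

@[simp] theorem leg_eq_inl_zero_iff {j : Fin 3} {i : ℕ} : leg s j i = .inl 0 ↔ i = 0 := by
  unfold leg; split_ifs <;> simp_all

@[simp] theorem leg_eq_inl_one_iff {j : Fin 3} {i : ℕ} : leg s j i = .inl 1 ↔ s < i := by
  unfold leg; split_ifs <;> simp_all

@[simp] theorem leg_eq_inr_iff {j j' : Fin 3} {i : ℕ} {k : Fin s} :
    leg s j i = .inr (j', k) ↔ j = j' ∧ i = k + 1 := by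
  unfold leg
  split_ifs <;> simp only [Sum.inr.injEq, Prod.mk.injEq, Fin.ext_iff, false_iff,
    not_and, and_congr_right_iff] <;> omega

theorem leg_eq_leg_iff {j j' : Fin 3} {i i' : ℕ} (hi : i ≤ s + 1) (hi' : i' ≤ s + 1) :
    leg s j i = leg s j' i' ↔ i = i' ∧ (j = j' ∨ i = 0 ∨ i = s + 1) := by
  unfold leg
  split_ifs <;> simp only [Sum.inl.injEq, Sum.inr.injEq, Prod.mk.injEq, Fin.ext_iff,
    zero_ne_one, one_ne_zero, true_iff, false_iff, not_and, not_or] <;> omega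

theorem exists_leg_eq (w : Fin 2 ⊕ Fin 3 × Fin s) : ∃ j i, i ≤ s + 1 ∧ leg s j i = w := by
  rcases w with a | ⟨j, k⟩
  · fin_cases a
    exacts [⟨0, 0, by simp⟩, ⟨0, s + 1, by simp⟩]
  · exact ⟨j, k + 1, by simp⟩

@[simp] theorem height_leg {j : Fin 3} {i : ℕ} (hi : i ≤ s + 1) : height (leg s j i) = i := by
  unfold leg
  split_ifs <;> simp only [height, Fin.coe_ofNat_eq_mod, Nat.zero_mod, Nat.mod_succ, zero_mul,
    one_mul] <;> omega

theorem height_le (w : Fin 2 ⊕ Fin 3 × Fin s) : height w ≤ s + 1 := by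
  obtain ⟨j, i, hi, rfl⟩ := exists_leg_eq w
  simp [hi]

theorem leg_adj_leg_succ (hs : 0 < s) (j : Fin 3) {i : ℕ} (hi : i ≤ s) :
    (thetaGraph s).Adj (leg s j i) (leg s j (i + 1)) := by
  rw [thetaGraph, fromRel_adj]
  refine ⟨by rw [Ne, leg_eq_leg_iff (by omega) (by omega)]; simp, ?_⟩
  rcases i with _ | k
  · exact Or.inl (Or.inl ⟨j, ⟨0, hs⟩, by simp⟩)
  rcases (by omega : k + 1 = s ∨ k + 1 < s) with rfl | hk
  · exact Or.inr (Or.inr (Or.inl ⟨j, ⟨k, by omega⟩, by simp⟩))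
  · exact Or.inl (Or.inr (Or.inr ⟨j, ⟨k, by omega⟩, ⟨k + 1, hk⟩, by simp⟩))

theorem exists_leg_of_adj {x y : Fin 2 ⊕ Fin 3 × Fin s} (h : (thetaGraph s).Adj x y) :
    ∃ j i, i ≤ s ∧ (x = leg s j i ∧ y = leg s j (i + 1) ∨ y = leg s j i ∧ x = leg s j (i + 1)) := by
  have inr_eq (j : Fin 3) (k : Fin s) : Sum.inr (j, k) = leg s j (k + 1) :=
    (leg_eq_inr_iff.mpr ⟨rfl, rfl⟩).symm
  have inl_one_eq (j : Fin 3) : Sum.inl 1 = leg s j (s + 1) :=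
    (leg_eq_inl_one_iff.mpr (lt_add_one s)).symm
  rw [thetaGraph, fromRel_adj] at h
  obtain ⟨-, h | h⟩ := h <;>
    obtain ⟨j, k, rfl, rfl, hk⟩ | ⟨j, k, rfl, rfl, hk⟩ | ⟨j, k, l, rfl, rfl, hl⟩ := h <;>
    have := k.isLt
  · exact ⟨j, 0, by omega, Or.inl ⟨rfl, by rw [inr_eq]; congr 1; omega⟩⟩
  · exact ⟨j, s, le_rfl, Or.inr ⟨by rw [inr_eq]; congr 1; omega, inl_one_eq j⟩⟩
  · exact ⟨j, k + 1, by omega, Or.inl ⟨inr_eq j k, by rw [inr_eq]; congr 1; omega⟩⟩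
  · exact ⟨j, 0, by omega, Or.inr ⟨rfl, by rw [inr_eq]; congr 1; omega⟩⟩
  · exact ⟨j, s, le_rfl, Or.inl ⟨by rw [inr_eq]; congr 1; omega, inl_one_eq j⟩⟩
  · exact ⟨j, k + 1, by omega, Or.inr ⟨inr_eq j k, by rw [inr_eq]; congr 1; omega⟩⟩

theorem height_adj {x y : Fin 2 ⊕ Fin 3 × Fin s} (h : (thetaGraph s).Adj x y) :
    height y = height x + 1 ∨ height x = height y + 1 := by
  obtain ⟨j, i, hi, ⟨rfl, rfl⟩ | ⟨rfl, rfl⟩⟩ := exists_leg_of_adj h <;>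
    simp [height_leg, hi, (by omega : i ≤ s + 1)]

theorem height_le_height_add_one {x y : Fin 2 ⊕ Fin 3 × Fin s} (h : (thetaGraph s).Adj x y) :
    height y ≤ height x + 1 := by
  have := height_adj h
  omega

theorem adj_leg {j : Fin 3} {i : ℕ} (hi₀ : 1 ≤ i) (hi : i ≤ s) {y : Fin 2 ⊕ Fin 3 × Fin s}
    (h : (thetaGraph s).Adj (leg s j i) y) : y = leg s j (i - 1) ∨ y = leg s j (i + 1) := by
  obtain ⟨j', i', hi', ⟨hx, rfl⟩ | ⟨rfl, hx⟩⟩ := exists_leg_of_adj h <;>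
    rw [leg_eq_leg_iff (by omega) (by omega)] at hx
  · obtain ⟨rfl, rfl | h | h⟩ := hx <;> first | omega | simp
  · obtain ⟨rfl, rfl | h | h⟩ := hx <;> first | omega | simp

theorem neighborSet_inl_zero_subset :
    (thetaGraph s).neighborSet (.inl 0) ⊆ Set.range fun j => leg s j 1 := by
  intro y h
  obtain ⟨j, i, hi, ⟨hx, rfl⟩ | ⟨rfl, hx⟩⟩ := exists_leg_of_adj h <;>
    have := leg_eq_inl_zero_iff.mp hx.symm
  · exact ⟨j, by rw [this]⟩
  · omega

theorem neighborSet_inl_one_subset :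
    (thetaGraph s).neighborSet (.inl 1) ⊆ Set.range fun j => leg s j s := by
  intro y h
  obtain ⟨j, i, hi, ⟨hx, rfl⟩ | ⟨rfl, hx⟩⟩ := exists_leg_of_adj h <;>
    have := leg_eq_inl_one_iff.mp hx.symm
  · omega
  · exact ⟨j, by rw [show i = s by omega]⟩

theorem ncard_neighborSet_inr_le_two (j : Fin 3) (k : Fin s) :
    ((thetaGraph s).neighborSet (.inr (j, k))).ncard ≤ 2 := by
  have hk : Sum.inr (j, k) = leg s j (k + 1) := (leg_eq_inr_iff.mpr ⟨rfl, rfl⟩).symm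
  have hsub : (thetaGraph s).neighborSet (.inr (j, k)) ⊆ {leg s j k, leg s j (k + 2)} := by
    rw [hk]
    exact fun y h => adj_leg (by omega) k.isLt h
  exact (Set.ncard_le_ncard hsub).trans ((Set.ncard_insert_le _ _).trans (by simp))

theorem ncard_neighborSet_le_three (w : Fin 2 ⊕ Fin 3 × Fin s) :
    ((thetaGraph s).neighborSet w).ncard ≤ 3 := by
  rcases w with a | ⟨j, k⟩
  · have hrange : ∀ f : Fin 3 → Fin 2 ⊕ Fin 3 × Fin s, (Set.range f).ncard ≤ 3 := fun f =>
      (Set.ncard_range_le f).trans (by simp)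
    fin_cases a
    · exact (Set.ncard_le_ncard neighborSet_inl_zero_subset).trans (hrange _)
    · exact (Set.ncard_le_ncard neighborSet_inl_one_subset).trans (hrange _)
  · exact (ncard_neighborSet_inr_le_two j k).trans (by norm_num)

theorem exists_eq_inl_of_two_lt_ncard {w : Fin 2 ⊕ Fin 3 × Fin s}
    (h : 2 < ((thetaGraph s).neighborSet w).ncard) : ∃ a, w = .inl a := by
  rcases w with a | ⟨j, k⟩
  · exact ⟨a, rfl⟩
  · exact absurd h (ncard_neighborSet_inr_le_two j k).not_gt

theorem twoConnected (hs : 0 < s) : TwoConnected (thetaGraph s) := by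
  refine ⟨by
    simp only [Nat.card_eq_fintype_card, Fintype.card_sum, Fintype.card_prod, Fintype.card_fin]
    omega, fun v => ?_⟩
  obtain ⟨j₀, i₀, hi₀, rfl⟩ := exists_leg_eq v
  have avoid {j : Fin 3} {i : ℕ} (hi : i ≤ s + 1) (h : ¬ (i = i₀ ∧ (j = j₀ ∨ i = 0 ∨ i = s + 1))) :
      leg s j i ∈ ({leg s j₀ i₀}ᶜ : Set _) := by
    rwa [Set.mem_compl_singleton_iff, Ne, leg_eq_leg_iff hi hi₀]
  have reach (j : Fin 3) {a b : ℕ} (hab : a ≤ b) (hb : b ≤ s + 1)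
      (hv : ∀ i, a ≤ i → i ≤ b → ¬ (i = i₀ ∧ (j = j₀ ∨ i = 0 ∨ i = s + 1)))
      {x y : ({leg s j₀ i₀}ᶜ : Set _)} (hx : leg s j a = x) (hy : leg s j b = y) :
      ((thetaGraph s).induce _).Reachable x y :=
    reachable_induce_of_chain (leg s j) hab (fun i _ hi => leg_adj_leg_succ hs j (by omega))
      (fun i h₁ h₂ => avoid (by omega) (hv i h₁ h₂)) hx hy
  rw [connected_iff_exists_forall_reachable]
  -- every vertex is joined along its own leg to a hub other than the removed vertex
  by_cases h₀ : i₀ = 0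
  · refine ⟨⟨leg s 0 (s + 1), avoid le_rfl (by omega)⟩, fun ⟨w, hw⟩ => ?_⟩
    obtain ⟨j, i, hi, rfl⟩ := exists_leg_eq w
    have : i ≠ 0 := by rintro rfl; exact hw (by simp [h₀])
    exact (reach j hi le_rfl (by omega) rfl (by simp [leg_eq_leg_iff])).symm
  refine ⟨⟨leg s 0 0, avoid (by omega) (by omega)⟩, fun ⟨w, hw⟩ => ?_⟩
  obtain ⟨j, i, hi, rfl⟩ := exists_leg_eq w
  have : ¬ (i = i₀ ∧ (j = j₀ ∨ i = 0 ∨ i = s + 1)) := fun h =>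
    hw (by rw [(leg_eq_leg_iff hi hi₀).mpr h]; rfl)
  by_cases hdown : j ≠ j₀ ∨ i < i₀ ∨ i₀ = s + 1
  · exact reach j (Nat.zero_le i) hi (by omega) rfl rfl
  · -- go up to the other hub, then back down along another leg
    have hub₁ : leg s j (s + 1) ∈ ({leg s j₀ i₀}ᶜ : Set _) := avoid le_rfl (by omega)
    exact (reach (j₀ + 1) (Nat.zero_le _) le_rfl (by omega) rfl
      (y := ⟨_, hub₁⟩) (by simp [leg_eq_leg_iff])).trans
      (reach j hi le_rfl (by omega) rfl rfl).symm

theorem not_isDominatingCycle (hs : 2 ≤ s) {n : ℕ} (f : ZMod n → Fin 2 ⊕ Fin 3 × Fin s) :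
    ¬ IsDominatingCycle (thetaGraph s) n f := by
  rintro ⟨hf, hdom⟩
  have hnext (j : Fin 3) (i : ℕ) (hi₀ : 1 ≤ i) (hi : i ≤ s) {p : ZMod n} (hp : f p = leg s j i) :
      f (p - 1) = leg s j (i - 1) ∨ f (p + 1) = leg s j (i - 1) :=
    hf.apply_sub_one_eq_or_apply_add_one_eq (y := leg s j (i + 1)) (hp ▸ fun _ => adj_leg hi₀ hi)
  -- the dominated edge `leg j 1 — leg j 2` forces `leg j 1` onto the cycle, next to the hub
  have key (j : Fin 3) : ∃ p, f p = leg s j 1 ∧ (f (p - 1) = .inl 0 ∨ f (p + 1) = .inl 0) := by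
    obtain ⟨p, hp⟩ : ∃ p, f p = leg s j 1 := by
      rcases hdom _ _ (leg_adj_leg_succ (by omega) j (i := 1) (by omega)) with ⟨p, hp⟩ | ⟨q, hq⟩
      · exact ⟨p, hp⟩
      · rcases hnext j 2 (by omega) hs hq with h | h
        exacts [⟨_, h⟩, ⟨_, h⟩]
    exact ⟨p, hp, hnext j 1 le_rfl (by omega) hp⟩
  choose p hp hhub using key
  obtain ⟨q, hq⟩ : ∃ q, f q = .inl 0 := by
    rcases hhub 0 with h | h
    exacts [⟨_, h⟩, ⟨_, h⟩]
  have hpq (j : Fin 3) : p j = q + 1 ∨ p j = q - 1 := by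
    rcases hhub j with h | h
    · left; linear_combination hf.2.1 (h.trans hq.symm)
    · right; linear_combination hf.2.1 (h.trans hq.symm)
  have hinj : Function.Injective p := fun j j' h => by
    have := congrArg f h
    rw [hp, hp, leg_eq_leg_iff (by omega) (by omega)] at this
    omega
  have := Finset.card_le_card_of_injOn p (s := Finset.univ) (t := {q + 1, q - 1})
    (fun j _ => by simpa using hpq j) hinj.injOn
  rw [Finset.card_univ, Fintype.card_fin] at this
  exact absurd (this.trans Finset.card_le_two) (by norm_num)

theorem eq_inl_zero_of_le_height {w x y : Fin 2 ⊕ Fin 3 × Fin s} (hxy : x ≠ y)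
    (hx : (thetaGraph s).Adj w x) (hy : (thetaGraph s).Adj w y)
    (hwx : height w ≤ height x) (hwy : height w ≤ height y) : w = .inl 0 := by
  obtain ⟨j, i, hi, rfl⟩ := exists_leg_eq w
  have := height_adj hx
  have := height_le x
  have hw : height (leg s j i) = i := height_leg hi
  rcases (by omega : i = 0 ∨ (1 ≤ i ∧ i ≤ s)) with rfl | ⟨hi₀, hi⟩
  · rfl
  · have : height (leg s j (i - 1)) = i - 1 := height_leg (by omega)
    rcases adj_leg hi₀ hi hx with rfl | rfl <;> rcases adj_leg hi₀ hi hy with rfl | rfl <;>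
      first | omega | exact absurd rfl hxy

theorem eq_inl_one_of_height_le {w x y : Fin 2 ⊕ Fin 3 × Fin s} (hxy : x ≠ y)
    (hx : (thetaGraph s).Adj w x) (hy : (thetaGraph s).Adj w y)
    (hwx : height x ≤ height w) (hwy : height y ≤ height w) : w = .inl 1 := by
  obtain ⟨j, i, hi, rfl⟩ := exists_leg_eq w
  have := height_adj hx
  have hw : height (leg s j i) = i := height_leg hi
  rcases (by omega : i = s + 1 ∨ (1 ≤ i ∧ i ≤ s)) with rfl | ⟨hi₀, hi⟩
  · simp
  · have : height (leg s j (i + 1)) = i + 1 := height_leg (by omega)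
    rcases adj_leg hi₀ hi hx with rfl | rfl <;> rcases adj_leg hi₀ hi hy with rfl | rfl <;>
      first | omega | exact absurd rfl hxy

theorem inl_mem_support_of_isCycle {v : Fin 2 ⊕ Fin 3 × Fin s} {c : (thetaGraph s).Walk v v}
    (hc : c.IsCycle) (a : Fin 2) : .inl a ∈ c.support := by
  fin_cases a
  · obtain ⟨w, hw, x, y, hxy, hx, hy, hwx, hwy⟩ := hc.exists_adj_adj_le height
    rwa [eq_inl_zero_of_le_height hxy hx hy hwx hwy] at hw
  · obtain ⟨w, hw, x, y, hxy, hx, hy, hwx, hwy⟩ := hc.exists_adj_adj_le (OrderDual.toDual ∘ height)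
    rwa [eq_inl_one_of_height_le hxy hx hy hwx hwy] at hw

theorem le_length_of_walk_inl_zero_inl_one (p : (thetaGraph s).Walk (.inl 0) (.inl 1)) :
    s + 1 ≤ p.length := by
  simpa [height] using p.le_add_length_of_forall_adj fun _ _ => height_le_height_add_one

theorem eq_of_embedding_eq_inl {V : Type*} [Fintype V] {H : SimpleGraph V} (hH : H.Connected)
    (hcard : Fintype.card V ≤ s) (e : H ↪g thetaGraph s) {u v : V} {a b : Fin 2}
    (hu : e u = .inl a) (hv : e v = .inl b) : a = b := by
  obtain ⟨p, hp⟩ := hH.exists_walk_length_lt u v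
  have hq : (p.map e.toHom).length < s := by rw [Walk.length_map]; omega
  fin_cases a <;> fin_cases b
  · rfl
  · have := le_length_of_walk_inl_zero_inl_one ((p.map e.toHom).copy hu hv)
    rw [Walk.length_copy] at this
    omega
  · have := le_length_of_walk_inl_zero_inl_one ((p.map e.toHom).reverse.copy hv hu)
    rw [Walk.length_copy, Walk.length_reverse] at this
    omega
  · rfl

theorem isAcyclic_of_embedding {V : Type*} [Fintype V] {H : SimpleGraph V} (hH : H.Connected)
    (hcard : Fintype.card V ≤ s) (e : H ↪g thetaGraph s) : H.IsAcyclic := by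
  intro v c hc
  have hc' : (c.map e.toHom).IsCycle := (Walk.isCycle_map_iff_of_injective e.injective).mpr hc
  have hrange (a : Fin 2) : ∃ u, e u = .inl a := by
    obtain ⟨u, -, hu⟩ := List.mem_map.mp (Walk.support_map _ _ ▸ inl_mem_support_of_isCycle hc' a)
    exact ⟨u, hu⟩
  obtain ⟨u₀, hu₀⟩ := hrange 0
  obtain ⟨u₁, hu₁⟩ := hrange 1
  exact absurd (eq_of_embedding_eq_inl hH hcard e hu₀ hu₁) (by decide)

theorem eq_of_ncard_neighborSet_eq_three {V : Type*} [Fintype V] {H : SimpleGraph V}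
    (hH : H.Connected) (hcard : Fintype.card V ≤ s) (e : H ↪g thetaGraph s) {u v : V}
    (hu : (H.neighborSet u).ncard = 3) (hv : (H.neighborSet v).ncard = 3) : u = v := by
  obtain ⟨a, ha⟩ := exists_eq_inl_of_two_lt_ncard (hu ▸ e.ncard_neighborSet_le u)
  obtain ⟨b, hb⟩ := exists_eq_inl_of_two_lt_ncard (hv ▸ e.ncard_neighborSet_le v)
  obtain rfl := eq_of_embedding_eq_inl hH hcard e ha hb
  exact e.injective (ha.trans hb.symm)

end thetaGraph

/-- If a finite family `H` of connected graphs is such that, for some `n₀`, every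
2-connected `H`-free graph of order at least `n₀` has a dominating cycle, then some
member of `H` is a tree with maximum degree at most 3 and at most one degree-3 vertex. -/
theorem stmt16 {ι : Type} [Fintype ι] (m : ι → ℕ) (H : ∀ i : ι, SimpleGraph (Fin (m i)))
    (hconn : ∀ i, (H i).Connected) (n₀ : ℕ)
    (hdom : ∀ (W : Type) [Fintype W] [DecidableEq W] (G : SimpleGraph W),
        TwoConnected G → n₀ ≤ Fintype.card W →
        (∀ i, ¬ Nonempty ((H i) ↪g G)) →
        ∃ (n : ℕ) (f : ZMod n → W), IsDominatingCycle G n f) :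
    ∃ i, (H i).IsTree ∧ (∀ v, ((H i).neighborSet v).ncard ≤ 3) ∧
      ∀ v w, ((H i).neighborSet v).ncard = 3 → ((H i).neighborSet w).ncard = 3 → v = w := by
  set s := n₀ + ∑ i, m i + 2
  obtain ⟨i, ⟨e⟩⟩ : ∃ i, Nonempty (H i ↪g thetaGraph s) := by
    by_contra! hfree
    obtain ⟨n, f, hf⟩ := hdom _ (thetaGraph s) (thetaGraph.twoConnected (by omega))
      (by simp only [Fintype.card_sum, Fintype.card_prod, Fintype.card_fin]; omega)
      fun i => not_nonempty_iff.mpr (hfree i)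
    exact thetaGraph.not_isDominatingCycle (by omega) f hf
  have hcard : Fintype.card (Fin (m i)) ≤ s := by
    have := Finset.single_le_sum (fun j _ => Nat.zero_le (m j)) (Finset.mem_univ i)
    simp only [Fintype.card_fin]
    omega
  exact ⟨i, ⟨hconn i, thetaGraph.isAcyclic_of_embedding (hconn i) hcard e⟩,
    fun v => (e.ncard_neighborSet_le v).trans (thetaGraph.ncard_neighborSet_le_three _),
    fun _ _ => thetaGraph.eq_of_ncard_neighborSet_eq_three (hconn i) hcard e⟩
end
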